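/- arXiv:1608.00715 — 5 statements merged into one kernel-verified Lean document; each statement's English description precedes it below -/
import Mathlib

section
/- Fix n ≥ 0 and k ≥ 1, and let P be the bounded poset obtained from B_n^{[k]} by adjoining a maximum 1̂. Then the labeling λ̄ is an EL-labeling of P: for every pair x < y in P, the closed interval [x,y] contains exactly one maximal chain whose label word is strictly increasing in the product order on [n+1]×{1,…,k}, and the label word of this chain lexicographically precedes (i.e., at the first index where the two label words differ, its label is strictly smaller in the product order than) the label word of every other maximal chain of [x,y]. -/
/-!
STATEMENT 2: the labeling λ̄ is an EL-labeling of P = B_n^{[k]} ∪ {1̂}: every closed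
interval [x,y] with x < y has a unique maximal chain with strictly increasing label word
(in the product order), and this chain lexicographically precedes every other maximal
chain of [x,y].

Conventions.  The color set {1,…,k} is modeled by `Fin k` (0-indexed, order-isomorphic),
and a weak composition with support in [k] is modeled as a multiset over `Fin k` (the
color j appearing μ(j) times); e_i corresponds to the singleton {i}, and the order on
weak compositions is `Multiset.le`.  Letters are 0-indexed (`Fin n`), so labels live in
ℕ × ℕ: the cover (A,ν) ⋖ (A∪{x},ν+e_i) gets label (x,i), and the covers ([n],μ) ⋖ 1̂
get the label (n,0) (i.e. "(n+1, 1)" in 1-indexed terms); the label poset is the product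
order on ℕ × ℕ.  Chains are lists bottom to top; a maximal chain of [x,y] is a
cover-chain from x to y.
-/

/-- `B_n^{[k]}`: weighted subsets of [n] with colors in [k]. -/
@[ext] structure WSubK (n k : ℕ) where
  carrier : Finset (Fin n)
  wt : Multiset (Fin k)
  card_eq : Multiset.card wt = carrier.card

instance {n k : ℕ} : PartialOrder (WSubK n k) where
  le p q := p.carrier ⊆ q.carrier ∧ p.wt ≤ q.wt
  le_refl p := ⟨subset_rfl, le_rfl⟩
  le_trans a b c hab hbc := ⟨hab.1.trans hbc.1, hab.2.trans hbc.2⟩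
  le_antisymm a b hab hba :=
    WSubK.ext (Finset.Subset.antisymm hab.1 hba.1) (le_antisymm hab.2 hba.2)

/-- The EL-labeling λ̄ of `B_n^{[k]} ∪ {1̂}`: a cover (A,ν) ⋖ (A∪{x},ν+e_i) inside
`B_n^{[k]}` is labeled (x,i), and any cover into the adjoined top is labeled (n,0). -/
def labK {n k : ℕ} (p q : WithTop (WSubK n k)) : ℕ × ℕ :=
  match p, q with
  | (p : WSubK n k), (q : WSubK n k) =>
      (∑ x ∈ q.carrier \ p.carrier, (x : ℕ), ((q.wt - p.wt).map Fin.val).sum)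
  | _, _ => (n, 0)

/-- The label word of a chain (listed bottom to top). -/
def labelWordK {n k : ℕ} (c : List (WithTop (WSubK n k))) : List (ℕ × ℕ) :=
  List.zipWith labK c c.tail

/-- `c` is a maximal chain of the closed interval `[x,y]`: it runs from `x` to `y` and
each consecutive pair is a covering relation. -/
def IsMaxChain' {α : Type*} [PartialOrder α] (x y : α) (c : List α) : Prop :=
  c.Chain' (· ⋖ ·) ∧ c.head? = some x ∧ c.getLast? = some y

/-- `u` lexicographically precedes `v`: at the first index where they differ, the label
of `u` is strictly smaller (in the product order) than that of `v`. -/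
def LexPrec {α : Type*} [PartialOrder α] : List α → List α → Prop
  | a :: u, b :: v => (a = b ∧ LexPrec u v) ∨ (a ≠ b ∧ a < b)
  | _, _ => False

/-!
From `x < y` the greedy step goes to the cover `z ≤ y` of least label: it adds the least letter
of `y` missing from `x`, with the least color that `y` still has to spare (color `0` when
`y = ⊤`). Labels of two consecutive greedy steps strictly increase, because the second step could
have been taken first. Conversely, along any maximal chain from `z` to `y` every letter still
missing and every color still to spare (or the color `0` of the final step into `⊤`) occurs as a
coordinate of some label; so if the label of `x ⋖ z` lies below all later labels, `z` is the
greedy step. Inducting along the greedy chain gives existence and uniqueness of the increasing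
chain, and its lexicographic minimality because distinct covers of `x` carry distinct labels.
-/

section Chains

variable {α β : Type*}

def labelWord (lab : α → α → β) (c : List α) : List β :=
  List.zipWith lab c c.tail

@[simp]
lemma labelWord_cons_cons (lab : α → α → β) (x z : α) (t : List α) :
    labelWord lab (x :: z :: t) = lab x z :: labelWord lab (z :: t) :=
  rfl

variable [PartialOrder α]

lemma isMaxChain'_iff {x y : α} {c : List α} :
    IsMaxChain' x y c ↔ c.IsChain (· ⋖ ·) ∧ c.head? = some x ∧ c.getLast? = some y :=
  Iff.rfl

lemma isMaxChain'_singleton_iff {x y a : α} : IsMaxChain' x y [a] ↔ a = x ∧ x = y := by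
  simp only [isMaxChain'_iff, List.isChain_singleton, List.head?_cons,
    List.getLast?_singleton, Option.some.injEq, true_and]
  constructor <;> rintro ⟨rfl, rfl⟩ <;> exact ⟨rfl, rfl⟩

lemma isMaxChain'_cons_cons_iff {x y a z : α} {t : List α} :
    IsMaxChain' x y (a :: z :: t) ↔ a = x ∧ x ⋖ z ∧ IsMaxChain' z y (z :: t) := by
  simp only [isMaxChain'_iff, List.isChain_cons_cons, List.head?_cons,
    List.getLast?_cons_cons, Option.some.injEq, true_and]
  constructor
  · rintro ⟨⟨hxz, hc⟩, rfl, hy⟩; exact ⟨rfl, hxz, hc, hy⟩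
  · rintro ⟨rfl, hxz, hc, hy⟩; exact ⟨⟨hxz, hc⟩, rfl, hy⟩

namespace IsMaxChain'

variable {x y : α} {c : List α}

lemma le (h : IsMaxChain' x y c) : x ≤ y := by
  induction c generalizing x with
  | nil => simp [IsMaxChain'] at h
  | cons a t ih =>
    rcases t with _ | ⟨z, t⟩
    · exact (isMaxChain'_singleton_iff.1 h).2.le
    · obtain ⟨-, hxz, hz⟩ := isMaxChain'_cons_cons_iff.1 h
      exact hxz.le.trans (ih hz)

lemma exists_eq_cons (h : IsMaxChain' x y c) : ∃ t, c = x :: t := by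
  rcases c with _ | ⟨a, t⟩
  · simp [IsMaxChain'] at h
  · obtain ⟨-, h, -⟩ := h
    exact ⟨t, by rw [Option.some.inj h]⟩

lemma eq_singleton (h : IsMaxChain' x x c) : c = [x] := by
  rcases c with _ | ⟨a, _ | ⟨z, t⟩⟩
  · simp [IsMaxChain'] at h
  · rw [(isMaxChain'_singleton_iff.1 h).1]
  · obtain ⟨-, hxz, hz⟩ := isMaxChain'_cons_cons_iff.1 h
    exact absurd hz.le hxz.lt.not_ge

lemma exists_eq_cons_cons (h : IsMaxChain' x y c) (hxy : x ≠ y) :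
    ∃ z t, c = x :: z :: t ∧ x ⋖ z ∧ IsMaxChain' z y (z :: t) := by
  rcases c with _ | ⟨a, _ | ⟨z, t⟩⟩
  · simp [IsMaxChain'] at h
  · exact absurd (isMaxChain'_singleton_iff.1 h).2 hxy
  · obtain ⟨rfl, hxz, hz⟩ := isMaxChain'_cons_cons_iff.1 h
    exact ⟨z, t, rfl, hxz, hz⟩

lemma exists_covBy_not_of (h : IsMaxChain' x y c) (lab : α → α → β) {P : α → Prop}
    (hx : ¬ P x) (hy : P y) : ∃ u w, u ⋖ w ∧ ¬ P u ∧ P w ∧ lab u w ∈ labelWord lab c := by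
  induction c generalizing x with
  | nil => simp [IsMaxChain'] at h
  | cons a t ih =>
    rcases t with _ | ⟨z, t⟩
    · exact absurd ((isMaxChain'_singleton_iff.1 h).2 ▸ hy) hx
    · obtain ⟨rfl, hxz, hz⟩ := isMaxChain'_cons_cons_iff.1 h
      by_cases hPz : P z
      · exact ⟨a, z, hxz, hx, hPz, List.mem_cons_self⟩
      · obtain ⟨u, w, huw, hu, hw, hmem⟩ := ih hz hPz
        exact ⟨u, w, huw, hu, hw, List.mem_cons_of_mem _ hmem⟩

end IsMaxChain'

end Chains

section MinCoverLabeling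

variable {α β : Type*} [PartialOrder α] [PartialOrder β]

def IsMinLabelCover (lab : α → α → β) (x y z : α) : Prop :=
  x ⋖ z ∧ z ≤ y ∧ ∀ z', x ⋖ z' → z' ≤ y → lab x z ≤ lab x z'

def IsELInterval (lab : α → α → β) (x y : α) : Prop :=
  ∃ c : List α, (IsMaxChain' x y c ∧ (labelWord lab c).IsChain (· < ·)) ∧
    (∀ d, IsMaxChain' x y d → (labelWord lab d).IsChain (· < ·) → d = c) ∧
    (∀ d, IsMaxChain' x y d → d ≠ c → LexPrec (labelWord lab c) (labelWord lab d))

structure IsMinCoverLabeling (lab : α → α → β) : Prop where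
  exists_isMinLabelCover : ∀ ⦃x y⦄, x < y → ∃ z, IsMinLabelCover lab x y z
  injective : ∀ ⦃x z z'⦄, x ⋖ z → x ⋖ z' → lab x z = lab x z' → z = z'
  lt_of_covBy : ∀ ⦃x y z w⦄, IsMinLabelCover lab x y z → z ⋖ w → w ≤ y → lab x z < lab z w
  isMinLabelCover_of_forall_le : ∀ ⦃x y z d⦄, x ⋖ z → IsMaxChain' z y d →
    (∀ ℓ ∈ labelWord lab d, lab x z ≤ ℓ) → IsMinLabelCover lab x y z

lemma isELInterval_refl (lab : α → α → β) (x : α) : IsELInterval lab x x :=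
  ⟨[x], ⟨⟨List.isChain_singleton x, rfl, rfl⟩, List.isChain_nil⟩,
    fun _ hd _ => hd.eq_singleton, fun _ hd hne => absurd hd.eq_singleton hne⟩

namespace IsMinCoverLabeling

variable {lab : α → α → β} (hlab : IsMinCoverLabeling lab)
include hlab

lemma isMinLabelCover_unique {x y z z' : α} (hz : IsMinLabelCover lab x y z)
    (hz' : IsMinLabelCover lab x y z') : z = z' :=
  hlab.injective hz.1 hz'.1 <| le_antisymm (hz.2.2 z' hz'.1 hz'.2.1) (hz'.2.2 z hz.1 hz.2.1)

lemma isMinLabelCover_of_isChain {x y z : α} {t : List α} (hc : IsMaxChain' x y (x :: z :: t))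
    (hinc : (labelWord lab (x :: z :: t)).IsChain (· < ·)) : IsMinLabelCover lab x y z := by
  obtain ⟨-, hxz, hz⟩ := isMaxChain'_cons_cons_iff.1 hc
  rw [labelWord_cons_cons, List.isChain_iff_pairwise, List.pairwise_cons] at hinc
  exact hlab.isMinLabelCover_of_forall_le hxz hz fun ℓ hℓ => (hinc.1 ℓ hℓ).le

lemma isELInterval_of_isMinLabelCover {x y z : α} (hz : IsMinLabelCover lab x y z)
    (hzy : IsELInterval lab z y) : IsELInterval lab x y := by
  obtain ⟨c, ⟨hc, hcinc⟩, hcuniq, hclex⟩ := hzy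
  obtain ⟨t, rfl⟩ := hc.exists_eq_cons
  have hxy : x ≠ y := (hz.1.lt.trans_le hz.2.1).ne
  refine ⟨x :: z :: t, ⟨isMaxChain'_cons_cons_iff.2 ⟨rfl, hz.1, hc⟩, ?_⟩, ?_, ?_⟩
  · rw [labelWord_cons_cons, List.isChain_cons]
    refine ⟨?_, hcinc⟩
    rcases t with _ | ⟨w, t⟩
    · simp [labelWord]
    · obtain ⟨-, hzw, hw⟩ := isMaxChain'_cons_cons_iff.1 hc
      simpa using hlab.lt_of_covBy hz hzw hw.le
  · intro d hd hdinc
    obtain ⟨z', t', rfl, -, hz'⟩ := hd.exists_eq_cons_cons hxy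
    obtain rfl : z' = z := hlab.isMinLabelCover_unique (hlab.isMinLabelCover_of_isChain hd hdinc) hz
    rw [hcuniq _ hz' hdinc.tail]
  · intro d hd hne
    obtain ⟨z', t', rfl, hxz', hz'⟩ := hd.exists_eq_cons_cons hxy
    rw [labelWord_cons_cons, labelWord_cons_cons]
    by_cases hzz' : z' = z
    · subst hzz'
      exact Or.inl ⟨rfl, hclex _ hz' fun h => hne (h ▸ rfl)⟩
    · have hlab_ne : lab x z ≠ lab x z' := fun h => hzz' (hlab.injective hz.1 hxz' h).symm
      exact Or.inr ⟨hlab_ne, (hz.2.2 z' hxz' hz'.le).lt_of_ne hlab_ne⟩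

theorem isELInterval [WellFoundedGT α] {x y : α} (hxy : x ≤ y) : IsELInterval lab x y := by
  induction x using WellFoundedGT.induction with
  | _ x ih =>
    rcases hxy.eq_or_lt with rfl | hlt
    · exact isELInterval_refl lab x
    · obtain ⟨z, hz⟩ := hlab.exists_isMinLabelCover hlt
      exact hlab.isELInterval_of_isMinLabelCover hz (ih z hz.1.lt hz.2.1)

end IsMinCoverLabeling

end MinCoverLabeling

namespace WSubK

variable {n k : ℕ} {p q : WSubK n k}

lemma le_iff : p ≤ q ↔ p.carrier ⊆ q.carrier ∧ p.wt ≤ q.wt := Iff.rfl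

lemma card_carrier_lt_card_carrier (hpq : p < q) : p.carrier.card < q.carrier.card := by
  refine (Finset.card_le_card hpq.le.1).lt_of_ne fun hcard => hpq.ne ?_
  have hcarrier := Finset.eq_of_subset_of_card_le hpq.le.1 hcard.ge
  refine WSubK.ext hcarrier (Multiset.eq_of_le_of_card_le hpq.le.2 ?_)
  rw [p.card_eq, q.card_eq, hcarrier]

instance : WellFoundedGT (WSubK n k) :=
  StrictAnti.wellFoundedGT (f := fun p : WSubK n k => n - p.carrier.card) fun p q hpq => by
    have hq : q.carrier.card ≤ n := by simpa using Finset.card_le_univ q.carrier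
    have := card_carrier_lt_card_carrier hpq
    dsimp only
    omega

/-- `p.cons b j hb` is the paper's `(A ∪ {b}, ν + e_j)` for `p = (A, ν)`. -/
def cons (p : WSubK n k) (b : Fin n) (j : Fin k) (hb : b ∉ p.carrier) : WSubK n k :=
  ⟨insert b p.carrier, j ::ₘ p.wt, by
    rw [Multiset.card_cons, p.card_eq, Finset.card_insert_of_notMem hb]⟩

variable {b : Fin n} {j : Fin k} {hb : b ∉ p.carrier}

@[simp] lemma carrier_cons : (p.cons b j hb).carrier = insert b p.carrier := rfl

@[simp] lemma wt_cons : (p.cons b j hb).wt = j ::ₘ p.wt := rfl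

lemma cons_le_iff (hpq : p ≤ q) : p.cons b j hb ≤ q ↔ b ∈ q.carrier ∧ j ∈ q.wt - p.wt := by
  rw [le_iff, carrier_cons, wt_cons, Finset.insert_subset_iff, ← Multiset.singleton_le,
    le_tsub_iff_left hpq.2, ← Multiset.singleton_add, add_comm, and_iff_left hpq.1]

lemma cons_le_cons (hpq : p ≤ q) (hb' : b ∉ q.carrier) : p.cons b j hb ≤ q.cons b j hb' :=
  ⟨Finset.insert_subset_insert b hpq.1, Multiset.cons_le_cons j hpq.2⟩

lemma lt_cons : p < p.cons b j hb :=
  lt_of_le_of_ne ⟨Finset.subset_insert b p.carrier, Multiset.le_cons_self p.wt j⟩ fun h =>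
    hb ((congrArg WSubK.carrier h).symm ▸ Finset.mem_insert_self b p.carrier)

lemma exists_cons_le (hpq : p < q) : ∃ b j hb, p.cons b j hb ≤ q := by
  have hcard := card_carrier_lt_card_carrier hpq
  obtain ⟨b, hb⟩ : (q.carrier \ p.carrier).Nonempty :=
    Finset.sdiff_nonempty.2 fun h => (Finset.card_le_card h).not_gt hcard
  obtain ⟨j, hj⟩ : ∃ j, j ∈ q.wt - p.wt := Multiset.exists_mem_of_ne_zero fun h => by
    have := congrArg Multiset.card h
    rw [Multiset.card_sub hpq.le.2, p.card_eq, q.card_eq, Multiset.card_zero] at this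
    omega
  rw [Finset.mem_sdiff] at hb
  exact ⟨b, j, hb.2, (cons_le_iff hpq.le).2 ⟨hb.1, hj⟩⟩

lemma covBy_iff : p ⋖ q ↔ ∃ b j hb, q = p.cons b j hb := by
  constructor
  · intro h
    obtain ⟨b, j, hb, hle⟩ := exists_cons_le h.lt
    exact ⟨b, j, hb, ((h.eq_or_eq lt_cons.le hle).resolve_left lt_cons.ne').symm⟩
  · rintro ⟨b, j, hb, rfl⟩
    refine ⟨lt_cons, fun r hpr hrq => ?_⟩
    have h₁ := card_carrier_lt_card_carrier hpr
    have h₂ := card_carrier_lt_card_carrier hrq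
    simp only [carrier_cons, Finset.card_insert_of_notMem hb] at h₂
    omega

lemma covBy_cons : p ⋖ p.cons b j hb :=
  covBy_iff.2 ⟨b, j, hb, rfl⟩

lemma isMax_iff (hk : 0 < k) : IsMax p ↔ p.carrier = Finset.univ := by
  constructor
  · intro hp
    by_contra hne
    obtain ⟨b, -, hb⟩ := Finset.exists_of_ssubset (Finset.ssubset_univ_iff.2 hne)
    exact hp.not_lt (lt_cons (j := ⟨0, hk⟩) (hb := hb))
  · intro hp q hpq
    refine (hpq.eq_of_not_lt fun h => ?_).ge
    have := card_carrier_lt_card_carrier h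
    have : q.carrier.card ≤ p.carrier.card := by rw [hp]; exact Finset.card_le_univ _
    omega

lemma coe_covBy_iff {z : WithTop (WSubK n k)} :
    (p : WithTop (WSubK n k)) ⋖ z ↔ (IsMax p ∧ z = ⊤) ∨ ∃ b j hb, z = ↑(p.cons b j hb) := by
  cases z with
  | top => rw [WithTop.coe_covBy_top]; simp
  | coe q => simp [covBy_iff]

end WSubK

section Labeling

variable {n k : ℕ} {p : WSubK n k} {b : Fin n} {j : Fin k} {hb : b ∉ p.carrier}

lemma labK_coe_cons :
    labK (p : WithTop (WSubK n k)) ↑(p.cons b j hb) = ((b : ℕ), (j : ℕ)) := by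
  simp [labK, Finset.insert_sdiff_cancel hb, ← Multiset.singleton_add]

lemma labK_top (x : WithTop (WSubK n k)) : labK x ⊤ = (n, 0) := by
  cases x <;> rfl

lemma isMinLabelCover_coe_cons {y : WithTop (WSubK n k)} (hy : ↑(p.cons b j hb) ≤ y)
    (hmin : ∀ b' j' hb', (p.cons b' j' hb' : WithTop (WSubK n k)) ≤ y → b ≤ b' ∧ j ≤ j') :
    IsMinLabelCover labK ↑p y ↑(p.cons b j hb) := by
  refine ⟨WithTop.coe_covBy_coe.2 WSubK.covBy_cons, hy, fun z' hz' hz'y => ?_⟩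
  obtain ⟨hp, -⟩ | ⟨b', j', hb', rfl⟩ := WSubK.coe_covBy_iff.1 hz'
  · exact absurd WSubK.lt_cons (hp.not_lt (b := p.cons b j hb))
  · obtain ⟨hbb', hjj'⟩ := hmin b' j' hb' hz'y
    rw [labK_coe_cons, labK_coe_cons, Prod.mk_le_mk]
    exact ⟨hbb', hjj'⟩

lemma isMinLabelCover_top (hp : IsMax p) :
    IsMinLabelCover labK (p : WithTop (WSubK n k)) ⊤ ⊤ := by
  refine ⟨WithTop.coe_covBy_top.2 hp, le_rfl, fun z' hz' _ => ?_⟩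
  obtain ⟨-, rfl⟩ | ⟨b', j', hb', -⟩ := WSubK.coe_covBy_iff.1 hz'
  · exact le_rfl
  · exact absurd WSubK.lt_cons (hp.not_lt (b := p.cons b' j' hb'))

lemma exists_isMinLabelCover_labK (hk : 0 < k) {x y : WithTop (WSubK n k)} (hxy : x < y) :
    ∃ z, IsMinLabelCover labK x y z := by
  cases x with
  | top => exact absurd hxy not_top_lt
  | coe p =>
  cases y with
  | top =>
    by_cases hp : IsMax p
    · exact ⟨⊤, isMinLabelCover_top hp⟩
    have hne : (Finset.univ \ p.carrier).Nonempty := by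
      rw [Finset.sdiff_nonempty, Finset.univ_subset_iff, ← WSubK.isMax_iff hk]
      exact hp
    have ha := (Finset.mem_sdiff.1 (Finset.min'_mem _ hne)).2
    refine ⟨_, isMinLabelCover_coe_cons (hb := ha) (j := ⟨0, hk⟩) le_top
      fun b' _ hb' _ => ⟨Finset.min'_le _ _ (by simpa using hb'), Nat.zero_le _⟩⟩
  | coe q =>
    have hpq := WithTop.coe_lt_coe.1 hxy
    obtain ⟨b, j, hb, hle⟩ := WSubK.exists_cons_le hpq
    obtain ⟨hbq, hj⟩ := (WSubK.cons_le_iff hpq.le).1 hle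
    have hne : (q.carrier \ p.carrier).Nonempty := ⟨b, Finset.mem_sdiff.2 ⟨hbq, hb⟩⟩
    have hne' : (q.wt - p.wt).toFinset.Nonempty := ⟨j, Multiset.mem_toFinset.2 hj⟩
    obtain ⟨haq, ha⟩ := Finset.mem_sdiff.1 (Finset.min'_mem _ hne)
    have hm := Multiset.mem_toFinset.1 (Finset.min'_mem _ hne')
    refine ⟨_, isMinLabelCover_coe_cons (hb := ha) (j := (q.wt - p.wt).toFinset.min' hne')
      (WithTop.coe_le_coe.2 ((WSubK.cons_le_iff hpq.le).2 ⟨haq, hm⟩)) fun b' j' hb' hle' => ?_⟩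
    obtain ⟨hb'q, hj'⟩ := (WSubK.cons_le_iff hpq.le).1 (WithTop.coe_le_coe.1 hle')
    exact ⟨Finset.min'_le _ _ (Finset.mem_sdiff.2 ⟨hb'q, hb'⟩),
      Finset.min'_le _ _ (Multiset.mem_toFinset.2 hj')⟩

lemma eq_of_covBy_of_labK_eq {x z z' : WithTop (WSubK n k)} (hz : x ⋖ z) (hz' : x ⋖ z')
    (h : labK x z = labK x z') : z = z' := by
  cases x with
  | top => exact absurd hz not_top_covBy
  | coe p =>
  obtain ⟨-, rfl⟩ | ⟨b, j, hb, rfl⟩ := WSubK.coe_covBy_iff.1 hz <;>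
  obtain ⟨-, rfl⟩ | ⟨b', j', hb', rfl⟩ := WSubK.coe_covBy_iff.1 hz'
  · rfl
  · rw [labK_top, labK_coe_cons] at h
    exact absurd (congrArg Prod.fst h) b'.isLt.ne'
  · rw [labK_top, labK_coe_cons] at h
    exact absurd (congrArg Prod.fst h) b.isLt.ne
  · rw [labK_coe_cons, labK_coe_cons, Prod.mk.injEq] at h
    obtain rfl := Fin.ext h.1
    obtain rfl := Fin.ext h.2
    rfl

lemma labK_lt_labK_of_isMinLabelCover (hk : 0 < k) {x y z w : WithTop (WSubK n k)}
    (hz : IsMinLabelCover labK x y z) (hzw : z ⋖ w) (hwy : w ≤ y) : labK x z < labK z w := by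
  cases x with
  | top => exact absurd hz.1 not_top_covBy
  | coe p =>
  obtain ⟨-, rfl⟩ | ⟨a, m, ha, rfl⟩ := WSubK.coe_covBy_iff.1 hz.1
  · exact absurd hzw not_top_covBy
  obtain ⟨-, rfl⟩ | ⟨a', m', ha', rfl⟩ := WSubK.coe_covBy_iff.1 hzw
  · -- the cover `p ⋖ p.cons a 0` is available as well, so `m = 0`
    have hmin := hz.2.2 _ (WithTop.coe_covBy_coe.2 (WSubK.covBy_cons (j := ⟨0, hk⟩) (hb := ha)))
      (le_top.trans hwy)
    rw [labK_coe_cons, labK_coe_cons] at hmin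
    rw [labK_top, labK_coe_cons]
    exact Prod.mk_lt_mk_of_lt_of_le a.isLt (Prod.mk_le_mk.1 hmin).2
  · -- `a'` could have been added first: `p ⋖ p.cons a' m' ≤ w`
    obtain ⟨ha'a, ha'p⟩ := not_or.1 (Finset.mem_insert.not.1 ha')
    have hle : p.cons a' m' ha'p ≤ (p.cons a m ha).cons a' m' ha' :=
      WSubK.cons_le_cons WSubK.lt_cons.le ha'
    have hmin := hz.2.2 _ (WithTop.coe_covBy_coe.2 WSubK.covBy_cons)
      ((WithTop.coe_le_coe.2 hle).trans hwy)
    rw [labK_coe_cons, labK_coe_cons] at hmin ⊢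
    exact hmin.lt_of_ne fun h => ha'a (Fin.ext (congrArg Prod.fst h)).symm

lemma exists_labK_fst_eq (hk : 0 < k) {r : WSubK n k} {y : WithTop (WSubK n k)}
    {d : List (WithTop (WSubK n k))} (hd : IsMaxChain' (r : WithTop (WSubK n k)) y d)
    {b : Fin n} (hbr : b ∉ r.carrier) (hby : ∀ s : WSubK n k, y = ↑s → b ∈ s.carrier) :
    ∃ ℓ ∈ labelWord labK d, ℓ.1 = b := by
  obtain ⟨u, w, huw, hu, hw, hmem⟩ := hd.exists_covBy_not_of labK
    (P := fun u => ∀ s : WSubK n k, u = ↑s → b ∈ s.carrier) (fun h => hbr (h r rfl)) hby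
  push Not at hu
  obtain ⟨s, rfl, hbs⟩ := hu
  obtain ⟨hs, -⟩ | ⟨b', j', hb', rfl⟩ := WSubK.coe_covBy_iff.1 huw
  · exact absurd ((WSubK.isMax_iff hk).1 hs ▸ Finset.mem_univ b) hbs
  · have hbb' : b = b' := by simpa [hbs] using hw _ rfl
    exact ⟨_, hmem, by rw [labK_coe_cons, hbb']⟩

lemma exists_labK_snd_le {r : WSubK n k} {y : WithTop (WSubK n k)}
    {d : List (WithTop (WSubK n k))} (hd : IsMaxChain' (r : WithTop (WSubK n k)) y d) {m : Fin k}
    (hmy : ∀ s : WSubK n k, y = ↑s → r.wt.count m < s.wt.count m) :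
    ∃ ℓ ∈ labelWord labK d, ℓ.2 ≤ m := by
  obtain ⟨u, w, huw, hu, hw, hmem⟩ := hd.exists_covBy_not_of labK
    (P := fun u => ∀ s : WSubK n k, u = ↑s → r.wt.count m < s.wt.count m)
    (fun h => (h r rfl).false) hmy
  push Not at hu
  obtain ⟨s, rfl, hs⟩ := hu
  obtain ⟨-, rfl⟩ | ⟨b', j', hb', rfl⟩ := WSubK.coe_covBy_iff.1 huw
  · exact ⟨_, hmem, by rw [labK_top]; exact Nat.zero_le _⟩
  · have hsw := hw _ rfl
    rw [WSubK.wt_cons, Multiset.count_cons] at hsw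
    have hmj : m = j' := by
      by_contra h
      simp only [h, if_false] at hsw
      omega
    exact ⟨_, hmem, by rw [labK_coe_cons, hmj]⟩

lemma isMinLabelCover_of_forall_labK_le (hk : 0 < k) {x y z : WithTop (WSubK n k)}
    {d : List (WithTop (WSubK n k))} (hxz : x ⋖ z) (hd : IsMaxChain' z y d)
    (hmin : ∀ ℓ ∈ labelWord labK d, labK x z ≤ ℓ) : IsMinLabelCover labK x y z := by
  cases x with
  | top => exact absurd hxz not_top_covBy
  | coe p =>
  obtain ⟨hp, rfl⟩ | ⟨b, j, hb, rfl⟩ := WSubK.coe_covBy_iff.1 hxz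
  · rw [top_le_iff.1 hd.le]
    exact isMinLabelCover_top hp
  simp only [labK_coe_cons] at hmin
  refine isMinLabelCover_coe_cons hd.le fun b' j' hb' hy => ⟨?_, ?_⟩
  · rcases eq_or_ne b b' with rfl | hbb'
    · exact le_rfl
    obtain ⟨ℓ, hℓ, hℓb'⟩ := exists_labK_fst_eq hk hd (b := b') (by simp [hbb'.symm, hb'])
      fun s hs => by subst hs; exact (WithTop.coe_le_coe.1 hy).1 (Finset.mem_insert_self b' _)
    exact Fin.le_iff_val_le_val.2 (hℓb' ▸ (hmin ℓ hℓ).1)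
  · rcases eq_or_ne j j' with rfl | hjj'
    · exact le_rfl
    obtain ⟨ℓ, hℓ, hℓj'⟩ := exists_labK_snd_le hd (m := j') fun s hs => by
      subst hs
      have := Multiset.count_le_of_le j' (WithTop.coe_le_coe.1 hy).2
      simp only [WSubK.wt_cons, Multiset.count_cons_self, Multiset.count_cons, hjj'.symm,
        if_false] at this ⊢
      omega
    exact (hmin ℓ hℓ).2.trans hℓj'

theorem isMinCoverLabeling_labK (hk : 0 < k) : IsMinCoverLabeling (labK (n := n) (k := k)) where
  exists_isMinLabelCover _ _ := exists_isMinLabelCover_labK hk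
  injective _ _ _ := eq_of_covBy_of_labK_eq
  lt_of_covBy _ _ _ _ := labK_lt_labK_of_isMinLabelCover hk
  isMinLabelCover_of_forall_le _ _ _ _ := isMinLabelCover_of_forall_labK_le hk

end Labeling

theorem EL_labeling_of_weighted_boolean_algebra (n k : ℕ) (hk : 1 ≤ k)
    (x y : WithTop (WSubK n k)) (hxy : x < y) :
    ∃ c : List (WithTop (WSubK n k)),
      (IsMaxChain' x y c ∧ (labelWordK c).Chain' (· < ·)) ∧
      (∀ d : List (WithTop (WSubK n k)),
        IsMaxChain' x y d → (labelWordK d).Chain' (· < ·) → d = c) ∧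
      (∀ d : List (WithTop (WSubK n k)),
        IsMaxChain' x y d → d ≠ c → LexPrec (labelWordK c) (labelWordK d)) :=
  (isMinCoverLabeling_labK hk).isELInterval hxy.le
end

section
/- For every k ≥ 1 the following identity holds in the ring of formal power series in y over ℚ[x_1,…,x_k]: ( ∑_{n≥0} (−1)^n h_n(x_1,…,x_k) y^n/n! ) · ( ∑_{n≥0} ( ∑_{μ ∈ wcomp_n, supp(μ) ⊆ [k]} |Ninc_μ| x^μ ) y^n/n! ) = 1, where h_n denotes the complete homogeneous symmetric polynomial of degree n. -/
/-!
Let `D_n = ∑_μ |Ninc_μ| x^μ`, the weighted count of ascent-free colored permutations of `[n]`.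
The identity amounts to `∑_t (-1)^t C(n,t) h_t D_{n-t} = [n = 0]`. The product
`C(n,t) h_t D_{n-t}` counts the colored permutations whose first `t` letters form a chain
(values increasing, colors weakly increasing) and which have no ascent from position `t` on:
choose the `t` values of the chain, a weakly increasing coloring of it, and an ascent-free
colored arrangement of the remaining values. For a fixed colored permutation the admissible `t`
are either none or two consecutive integers `a, a + 1` (the position `a` between the chain and
the tail may or may not be an ascent), so the alternating sum cancels except on the empty
permutation.
-/

open MvPolynomial

/-- An ascent of the colored permutation `(σ, c)`. -/
def HasAscent {n : ℕ} {C : Type*} [Preorder C] (σ : Equiv.Perm (Fin n)) (c : Fin n → C) : Prop :=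
  ∃ i : ℕ, ∃ h : i + 1 < n,
    σ ⟨i, Nat.lt_of_succ_lt h⟩ < σ ⟨i + 1, h⟩ ∧
      c (σ ⟨i, Nat.lt_of_succ_lt h⟩) ≤ c (σ ⟨i + 1, h⟩)

/-- `|Ninc_μ|`: the number of ascent-free colored permutations of `[n]`, with colors in
`Fin k`, whose content is `μ : Fin k → ℕ`. -/
noncomputable def nincCount (n k : ℕ) (μ : Fin k → ℕ) : ℕ :=
  Nat.card {w : Equiv.Perm (Fin n) × (Fin n → Fin k) //
    (∀ j : Fin k, (Finset.univ.filter (fun x => w.2 x = j)).card = μ j) ∧ ¬ HasAscent w.1 w.2}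

/-- The complete homogeneous symmetric polynomial of degree `n` in `k` variables over ℚ. -/
noncomputable def hsymmPoly (k n : ℕ) : MvPolynomial (Fin k) ℚ :=
  ∑ μ ∈ Finset.Nat.antidiagonalTuple k n, ∏ j : Fin k, (X j) ^ μ j

open Finset

open scoped Classical Nat

section Ascents

variable {α C : Type*} [Preorder α] [Preorder C]

/-- Colors are attached to positions rather than to values (a colored permutation `(σ, c)`
becomes `(σ, c ∘ σ)`), so that cutting a word in two cuts its coloring by `Fin.append`. -/
def IsAscentAt {n : ℕ} (f : Fin n → α) (d : Fin n → C) (i : ℕ) : Prop :=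
  ∃ h : i + 1 < n, f ⟨i, by omega⟩ < f ⟨i + 1, h⟩ ∧ d ⟨i, by omega⟩ ≤ d ⟨i + 1, h⟩

lemma hasAscent_iff_exists_isAscentAt {n : ℕ} (σ : Equiv.Perm (Fin n)) (c : Fin n → C) :
    HasAscent σ c ↔ ∃ i, IsAscentAt σ (c ∘ σ) i :=
  Iff.rfl

lemma isAscentAt_comp_strictMono {γ : Type*} [LinearOrder γ] {n : ℕ} {e : γ → α}
    (he : StrictMono e) (f : Fin n → γ) (d : Fin n → C) (i : ℕ) :
    IsAscentAt (e ∘ f) d i ↔ IsAscentAt f d i := by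
  simp only [IsAscentAt, Function.comp_apply, he.lt_iff_lt]

lemma isAscentAt_comp_castAdd {t m : ℕ} (f : Fin (t + m) → α) (d : Fin (t + m) → C) {i : ℕ}
    (hi : i + 1 < t) :
    IsAscentAt (f ∘ Fin.castAdd m) (d ∘ Fin.castAdd m) i ↔ IsAscentAt f d i := by
  simp only [IsAscentAt, Function.comp_apply]
  exact ⟨fun ⟨_, h⟩ => ⟨by omega, h⟩, fun ⟨_, h⟩ => ⟨hi, h⟩⟩

lemma isAscentAt_comp_natAdd {t m : ℕ} (f : Fin (t + m) → α) (d : Fin (t + m) → C) (j : ℕ) :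
    IsAscentAt (f ∘ Fin.natAdd t) (d ∘ Fin.natAdd t) j ↔ IsAscentAt f d (t + j) := by
  simp only [IsAscentAt, Function.comp_apply, Fin.natAdd_mk, ← add_assoc]
  exact ⟨fun ⟨_, h⟩ => ⟨by omega, h⟩, fun ⟨_, h⟩ => ⟨by omega, h⟩⟩

lemma forall_isAscentAt_iff_strictMono_and_monotone {n : ℕ} (f : Fin n → α)
    (d : Fin n → C) : (∀ i, i + 1 < n → IsAscentAt f d i) ↔ StrictMono f ∧ Monotone d := by
  rcases n with _ | n
  · exact ⟨fun _ => ⟨fun a => a.elim0, fun a => a.elim0⟩, fun _ i hi => absurd hi (by omega)⟩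
  rw [Fin.strictMono_iff_lt_succ, Fin.monotone_iff_le_succ, ← forall_and]
  exact ⟨fun h i => (h i (by omega)).2, fun h i hi => ⟨hi, h ⟨i, by omega⟩⟩⟩

lemma forall_isAscentAt_iff_lt_iff {n : ℕ} (f : Fin n → α) (d : Fin n → C) :
    (∀ i, IsAscentAt f d i ↔ i < n) ↔ n = 0 := by
  refine ⟨fun h => ?_, fun hn i => ?_⟩
  · by_contra hn
    obtain ⟨hlt, -⟩ := (h (n - 1)).2 (by omega)
    omega
  · exact ⟨fun hi => absurd hi.1 (by omega), fun hi => absurd hi (by omega)⟩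

end Ascents

section Cuts

/-- `t` cuts a word with ascent positions `P` into a chain of length `t` and an ascent-free
tail; whether position `t - 1` is an ascent is left open. -/
def IsChainCut (P : ℕ → Prop) (t : ℕ) : Prop :=
  (∀ i, i + 1 < t → P i) ∧ ∀ i, t ≤ i → ¬ P i

lemma isChainCut_succ_iff (P : ℕ → Prop) (n : ℕ) :
    IsChainCut P (n + 1) ↔ (∀ i, P i ↔ i < n + 1) ∨ ∀ i, P i ↔ i < n := by
  constructor
  · rintro ⟨hlt, hge⟩
    have hP : ∀ i, P i → i < n + 1 := fun i hi => by
      by_contra h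
      exact hge i (by omega) hi
    by_cases hn : P n
    · refine .inl fun i => ⟨hP i, fun hi => ?_⟩
      rcases Nat.lt_succ_iff_lt_or_eq.1 hi with hi | rfl
      exacts [hlt i (by omega), hn]
    · refine .inr fun i => ⟨fun hi => ?_, fun hi => hlt i (by omega)⟩
      rcases Nat.lt_succ_iff_lt_or_eq.1 (hP i hi) with hi' | rfl
      exacts [hi', absurd hi hn]
  · rintro (h | h) <;>
      exact ⟨fun i _ => (h i).2 (by omega), fun i hi hP => by have := (h i).1 hP; omega⟩

/-- If `P = {i | i < a}`, the cuts are exactly `a` and `a + 1`; otherwise there is none. -/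
lemma sum_range_isChainCut_neg_one_pow {R : Type*} [Ring R] (P : ℕ → Prop) (n : ℕ) :
    ∑ t ∈ range (n + 1), (if IsChainCut P t then (-1 : R) ^ t else 0) =
      if ∀ i, P i ↔ i < n then (-1) ^ n else 0 := by
  induction n with
  | zero => simp [IsChainCut]
  | succ n ih =>
    rw [sum_range_succ, ih]
    by_cases h : ∀ i, P i ↔ i < n
    · have h' : ¬ ∀ i, P i ↔ i < n + 1 := fun h' => (h n).1 ((h' n).2 n.lt_succ_self) |>.false
      rw [if_pos h, if_pos ((isChainCut_succ_iff P n).2 (.inr h)), if_neg h', pow_succ]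
      simp
    · simp only [isChainCut_succ_iff, h, if_false, or_false, zero_add]

lemma isChainCut_isAscentAt_iff {α C : Type*} [Preorder α] [Preorder C] {t m : ℕ}
    (f : Fin (t + m) → α) (d : Fin (t + m) → C) :
    IsChainCut (IsAscentAt f d) t ↔
      (StrictMono (f ∘ Fin.castAdd m) ∧ Monotone (d ∘ Fin.castAdd m)) ∧
        ∀ j, ¬ IsAscentAt (f ∘ Fin.natAdd t) (d ∘ Fin.natAdd t) j := by
  rw [IsChainCut, ← forall_isAscentAt_iff_strictMono_and_monotone]
  refine and_congr (forall₂_congr fun i hi => (isAscentAt_comp_castAdd f d hi).symm) ?_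
  simp only [isAscentAt_comp_natAdd]
  exact ⟨fun h j => h _ (Nat.le_add_right t j),
    fun h i hi => Nat.add_sub_cancel' hi ▸ h (i - t)⟩

end Cuts

section Colorings

variable {k : ℕ}

noncomputable def colorWeight {n : ℕ} (d : Fin n → Fin k) : MvPolynomial (Fin k) ℚ :=
  ∏ i, X (d i)

def content {n : ℕ} (d : Fin n → Fin k) (j : Fin k) : ℕ :=
  #{i | d i = j}

lemma colorWeight_eq_prod_pow_content {n : ℕ} (d : Fin n → Fin k) :
    colorWeight d = ∏ j, X j ^ content d j := by
  rw [colorWeight, ← prod_fiberwise univ d]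
  refine prod_congr rfl fun j _ => ?_
  rw [content, ← prod_const]
  exact prod_congr rfl fun i hi => by rw [(mem_filter.1 hi).2]

lemma colorWeight_append {t m : ℕ} (c : Fin t → Fin k) (d : Fin m → Fin k) :
    colorWeight (Fin.append c d) = colorWeight c * colorWeight d := by
  simp only [colorWeight, Fin.prod_univ_add, Fin.append_left, Fin.append_right]

lemma colorWeight_comp_perm {n : ℕ} (c : Fin n → Fin k) (σ : Equiv.Perm (Fin n)) :
    colorWeight (c ∘ σ) = colorWeight c :=
  Equiv.prod_comp σ fun i => X (c i)

lemma content_mem_antidiagonalTuple {n : ℕ} (d : Fin n → Fin k) :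
    content d ∈ Finset.Nat.antidiagonalTuple k n := by
  rw [Finset.Nat.mem_antidiagonalTuple]
  simp only [content]
  rw [← card_eq_sum_card_fiberwise fun i _ => mem_univ (d i), card_univ, Fintype.card_fin]

lemma content_eq_count_ofFn {n : ℕ} (d : Fin n → Fin k) (j : Fin k) :
    content d j = (List.ofFn d).count j := by
  rw [← Multiset.coe_count, ← Fin.univ_val_map, Multiset.count_map, content, card_def]
  simp_rw [eq_comm]
  rfl

lemma eq_of_monotone_of_content_eq {n : ℕ} {c d : Fin n → Fin k} (hc : Monotone c)
    (hd : Monotone d) (h : content c = content d) : c = d := by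
  refine List.ofFn_injective (List.Perm.eq_of_sortedLE hc.sortedLE_ofFn hd.sortedLE_ofFn ?_)
  exact List.perm_iff_count.2 fun j => by
    rw [← content_eq_count_ofFn, ← content_eq_count_ofFn, h]

lemma exists_monotone_content_eq {n : ℕ} {μ : Fin k → ℕ}
    (hμ : μ ∈ Finset.Nat.antidiagonalTuple k n) :
    ∃ d : Fin n → Fin k, Monotone d ∧ content d = μ := by
  set L := (∑ j, μ j • {j} : Multiset (Fin k)).sort
  have hlen : L.length = n := by
    rw [Multiset.length_sort, Multiset.card_sum]
    simpa using (Finset.Nat.mem_antidiagonalTuple.1 hμ)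
  subst hlen
  refine ⟨L.get, (Multiset.pairwise_sort _ _).sortedLE.monotone_get, funext fun j => ?_⟩
  rw [content_eq_count_ofFn, List.ofFn_get, ← Multiset.coe_count, Multiset.sort_eq]
  simp [Multiset.count_sum', Multiset.count_singleton]

end Colorings

lemma hsymmPoly_eq_sum_monotone (k n : ℕ) :
    hsymmPoly k n = ∑ d ∈ univ.filter (fun d : Fin n → Fin k => Monotone d), colorWeight d := by
  refine (sum_bij (fun d _ => content d) (fun d _ => content_mem_antidiagonalTuple d)
    (fun c hc d hd => eq_of_monotone_of_content_eq (mem_filter.1 hc).2 (mem_filter.1 hd).2)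
    (fun μ hμ => ?_) (fun d _ => colorWeight_eq_prod_pow_content d)).symm
  obtain ⟨d, hd, rfl⟩ := exists_monotone_content_eq hμ
  exact ⟨d, mem_filter.2 ⟨mem_univ d, hd⟩, rfl⟩

section AscentFree

variable (k : ℕ)

noncomputable def ascentFreeWeight {α : Type*} [Preorder α] {m : ℕ} (f : Fin m → α) :
    MvPolynomial (Fin k) ℚ :=
  ∑ d ∈ univ.filter (fun d : Fin m → Fin k => ∀ i, ¬ IsAscentAt f d i), colorWeight d

noncomputable def ascentFreePoly (m : ℕ) : MvPolynomial (Fin k) ℚ :=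
  ∑ σ : Equiv.Perm (Fin m), ascentFreeWeight k σ

lemma ascentFreeWeight_comp_strictMono {α β : Type*} [LinearOrder α] [Preorder β] {e : α → β}
    (he : StrictMono e) {m : ℕ} (f : Fin m → α) :
    ascentFreeWeight k (e ∘ f) = ascentFreeWeight k f := by
  rw [ascentFreeWeight, ascentFreeWeight]
  congr 1
  exact filter_congr fun d _ =>
    forall_congr' fun i => not_congr (isAscentAt_comp_strictMono he f d i)

lemma sum_colorWeight_not_hasAscent {n : ℕ} (σ : Equiv.Perm (Fin n)) :
    ∑ c ∈ univ.filter (fun c : Fin n → Fin k => ¬ HasAscent σ c), colorWeight c =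
      ascentFreeWeight k σ := by
  rw [ascentFreeWeight, sum_filter, sum_filter]
  refine Fintype.sum_equiv (σ.symm.arrowCongr (Equiv.refl _)) _ _ fun c => ?_
  rw [show σ.symm.arrowCongr (Equiv.refl _) c = c ∘ σ from rfl, colorWeight_comp_perm]
  simp only [hasAscent_iff_exists_isAscentAt, not_exists]

lemma sum_nincCount_mul_eq_ascentFreePoly (n : ℕ) :
    ∑ μ ∈ Finset.Nat.antidiagonalTuple k n,
        (nincCount n k μ : MvPolynomial (Fin k) ℚ) * ∏ j : Fin k, X j ^ μ j =
      ascentFreePoly k n := by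
  set W := univ.filter fun w : Equiv.Perm (Fin n) × (Fin n → Fin k) => ¬ HasAscent w.1 w.2
  have hfiber : ∀ μ, (nincCount n k μ : MvPolynomial (Fin k) ℚ) * ∏ j : Fin k, X j ^ μ j =
      ∑ w ∈ W with content w.2 = μ, colorWeight w.2 := fun μ => by
    have hcard : nincCount n k μ = #{w ∈ W | content w.2 = μ} := by
      rw [nincCount, Nat.card_eq_fintype_card, Fintype.card_subtype, filter_filter]
      simp only [funext_iff, content, and_comm]
    rw [hcard, ← nsmul_eq_mul, ← sum_const]
    exact sum_congr rfl fun w hw => by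
      rw [colorWeight_eq_prod_pow_content, (mem_filter.1 hw).2]
  simp only [hfiber]
  rw [sum_fiberwise_of_maps_to fun w _ => content_mem_antidiagonalTuple w.2, sum_filter,
    Fintype.sum_prod_type, ascentFreePoly]
  simp only [← sum_filter, sum_colorWeight_not_hasAscent]

end AscentFree

section Shuffles

variable {t m : ℕ}

lemma card_compl_of_card_eq {S : Finset (Fin (t + m))} (hS : #S = t) : #Sᶜ = m := by
  rw [card_compl, hS, Fintype.card_fin, Nat.add_sub_cancel_left]

/-- Lists `S` increasingly in the first `t` positions and `Sᶜ` in the pattern `σ` afterwards. -/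
def shuffle (S : Finset (Fin (t + m))) (hS : #S = t) (σ : Equiv.Perm (Fin m)) :
    Equiv.Perm (Fin (t + m)) :=
  (finSumFinEquiv.symm.trans (Equiv.sumCongr (Equiv.refl _) σ)).trans
    (finSumEquivOfFinset hS (card_compl_of_card_eq hS))

variable {S : Finset (Fin (t + m))} (hS : #S = t) (σ : Equiv.Perm (Fin m))

lemma shuffle_comp_castAdd : shuffle S hS σ ∘ Fin.castAdd m = S.orderEmbOfFin hS :=
  funext fun i => by simp [shuffle]

lemma shuffle_comp_natAdd :
    shuffle S hS σ ∘ Fin.natAdd t = Sᶜ.orderEmbOfFin (card_compl_of_card_eq hS) ∘ σ :=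
  funext fun j => by simp [shuffle]

lemma strictMono_shuffle_comp_castAdd : StrictMono (shuffle S hS σ ∘ Fin.castAdd m) := by
  rw [shuffle_comp_castAdd]
  exact (S.orderEmbOfFin hS).strictMono

lemma shuffle_inj {S' : Finset (Fin (t + m))} (hS' : #S' = t) {σ' : Equiv.Perm (Fin m)}
    (h : shuffle S hS σ = shuffle S' hS' σ') : S = S' ∧ σ = σ' := by
  have hSS' : S = S' := by
    rw [← image_orderEmbOfFin_univ S hS, ← image_orderEmbOfFin_univ S' hS',
      ← shuffle_comp_castAdd hS σ, ← shuffle_comp_castAdd hS' σ', h]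
  subst hSS'
  have h' := congrArg (fun τ : Equiv.Perm (Fin (t + m)) => ⇑τ ∘ Fin.natAdd t) h
  simp only [shuffle_comp_natAdd] at h'
  exact ⟨rfl, Equiv.ext fun j => (Sᶜ.orderEmbOfFin _).injective (congrFun h' j)⟩

lemma exists_shuffle_eq {τ : Equiv.Perm (Fin (t + m))} (hτ : StrictMono (τ ∘ Fin.castAdd m)) :
    ∃ (S : Finset (Fin (t + m))) (hS : #S = t) (σ : Equiv.Perm (Fin m)), shuffle S hS σ = τ := by
  set S := univ.image (τ ∘ Fin.castAdd m)
  have hS : #S = t := by rw [card_image_of_injective _ hτ.injective, card_univ, Fintype.card_fin]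
  have hmem : ∀ j, τ (Fin.natAdd t j) ∈ Sᶜ := fun j => by
    simp only [S, mem_compl, mem_image, mem_univ, true_and, Function.comp_apply,
      τ.injective.eq_iff, not_exists]
    exact fun i h => absurd (congrArg Fin.val h) (by simp; omega)
  set e := Sᶜ.orderIsoOfFin (card_compl_of_card_eq hS)
  have hinj : Function.Injective fun j => e.symm ⟨τ (Fin.natAdd t j), hmem j⟩ := fun a b h => by
    simpa using h
  refine ⟨S, hS, Equiv.ofBijective _ (Finite.injective_iff_bijective.1 hinj), Equiv.ext ?_⟩
  refine Fin.addCases (fun i => ?_) (fun j => ?_)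
  · rw [← Function.comp_apply (f := shuffle S hS _), shuffle_comp_castAdd,
      ← orderEmbOfFin_unique hS (fun i => mem_image_of_mem _ (mem_univ i)) hτ]
    rfl
  · rw [← Function.comp_apply (f := shuffle S hS _), shuffle_comp_natAdd, Function.comp_apply,
      ← coe_orderIsoOfFin_apply]
    simp [e]

lemma sum_ascentFreeWeight_comp_natAdd (k : ℕ) :
    ∑ τ ∈ univ.filter (fun τ : Equiv.Perm (Fin (t + m)) => StrictMono (τ ∘ Fin.castAdd m)),
        ascentFreeWeight k (τ ∘ Fin.natAdd t) =
      (t + m).choose t • ascentFreePoly k m := by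
  have hbij : Function.Bijective
      fun p : {S : Finset (Fin (t + m)) // #S = t} × Equiv.Perm (Fin m) =>
      (⟨shuffle p.1.1 p.1.2 p.2, strictMono_shuffle_comp_castAdd _ _⟩ :
        {τ : Equiv.Perm (Fin (t + m)) // StrictMono (τ ∘ Fin.castAdd m)}) := by
    refine ⟨fun ⟨⟨S, hS⟩, σ⟩ ⟨⟨S', hS'⟩, σ'⟩ h => ?_, fun ⟨τ, hτ⟩ => ?_⟩
    · obtain ⟨rfl, rfl⟩ := shuffle_inj hS σ hS' (congrArg Subtype.val h)
      rfl
    · obtain ⟨S, hS, σ, rfl⟩ := exists_shuffle_eq hτ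
      exact ⟨(⟨S, hS⟩, σ), rfl⟩
  rw [sum_subtype _ (fun τ => by rw [mem_filter, and_iff_right (mem_univ τ)]),
    ← Fintype.sum_bijective _ hbij (fun p => ascentFreeWeight k p.2) _ fun p => by
      simp only [shuffle_comp_natAdd,
        ascentFreeWeight_comp_strictMono k (orderEmbOfFin _ _).strictMono],
    Fintype.sum_prod_type]
  simp only
  rw [sum_const, card_univ, Fintype.card_finset_len, Fintype.card_fin, ascentFreePoly]

end Shuffles

section CutPolynomials

variable (k : ℕ)

noncomputable def cutPoly (n t : ℕ) : MvPolynomial (Fin k) ℚ :=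
  ∑ σ : Equiv.Perm (Fin n),
    ∑ d ∈ univ.filter (fun d : Fin n → Fin k => IsChainCut (IsAscentAt σ d) t), colorWeight d

lemma sum_colorWeight_isChainCut {α : Type*} [Preorder α] {t m : ℕ} (f : Fin (t + m) → α) :
    ∑ d ∈ univ.filter (fun d : Fin (t + m) → Fin k => IsChainCut (IsAscentAt f d) t),
        colorWeight d =
      if StrictMono (f ∘ Fin.castAdd m) then
        hsymmPoly k t * ascentFreeWeight k (f ∘ Fin.natAdd t)
      else 0 := by
  have happend : ∀ (c : Fin t → Fin k) (e : Fin m → Fin k),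
      Fin.appendEquiv t m (c, e) = Fin.append c e := fun _ _ => rfl
  have hleft : ∀ (c : Fin t → Fin k) (e : Fin m → Fin k), Fin.append c e ∘ Fin.castAdd m = c :=
    fun c e => funext (Fin.append_left c e)
  have hright : ∀ (c : Fin t → Fin k) (e : Fin m → Fin k), Fin.append c e ∘ Fin.natAdd t = e :=
    fun c e => funext (Fin.append_right c e)
  rw [sum_filter, ← (Fin.appendEquiv t m).sum_comp, Fintype.sum_prod_type]
  simp only [happend, isChainCut_isAscentAt_iff, colorWeight_append, hleft, hright]
  split_ifs with hf
  · simp only [hf, true_and, hsymmPoly_eq_sum_monotone, ascentFreeWeight, sum_filter,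
      sum_mul_sum, ite_zero_mul_ite_zero]
  · simp [hf]

lemma cutPoly_add (t m : ℕ) :
    cutPoly k (t + m) t = (t + m).choose t • (hsymmPoly k t * ascentFreePoly k m) := by
  simp only [cutPoly, sum_colorWeight_isChainCut, ← mul_ite_zero, ← mul_sum]
  rw [← mul_smul_comm, ← sum_ascentFreeWeight_comp_natAdd, sum_filter]
  -- the two `if`s differ only in their `Decidable` instances
  congr!

lemma sum_range_neg_one_pow_smul_cutPoly (n : ℕ) :
    ∑ t ∈ range (n + 1), (-1 : ℚ) ^ t • cutPoly k n t = if n = 0 then 1 else 0 := by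
  have hsign : ∀ (σ : Equiv.Perm (Fin n)) (d : Fin n → Fin k),
      ∑ t ∈ range (n + 1), (if IsChainCut (IsAscentAt σ d) t then (-1 : ℚ) ^ t else 0) =
        if n = 0 then 1 else 0 := fun σ d => by
    rw [sum_range_isChainCut_neg_one_pow, forall_isAscentAt_iff_lt_iff]
    split_ifs <;> simp_all
  calc ∑ t ∈ range (n + 1), (-1 : ℚ) ^ t • cutPoly k n t
      = ∑ σ : Equiv.Perm (Fin n), ∑ d : Fin n → Fin k, ∑ t ∈ range (n + 1),
          (if IsChainCut (IsAscentAt σ d) t then (-1 : ℚ) ^ t else 0) • colorWeight d := by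
        simp only [cutPoly, sum_filter, smul_sum, smul_ite, smul_zero, ite_smul, zero_smul]
        rw [sum_comm]
        exact sum_congr rfl fun σ _ => sum_comm
    _ = if n = 0 then 1 else 0 := by
        simp only [← sum_smul, hsign]
        split_ifs with hn
        · subst hn
          simp [colorWeight]
        · simp

end CutPolynomials

theorem colored_exterior_dimension_multiplicative_inverse_general (k : ℕ) :
    (PowerSeries.mk fun n => ((-1 : ℚ) ^ n * (Nat.factorial n : ℚ)⁻¹) • hsymmPoly k n) *
      (PowerSeries.mk fun n => (Nat.factorial n : ℚ)⁻¹ •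
        ∑ μ ∈ Finset.Nat.antidiagonalTuple k n,
          (nincCount n k μ : MvPolynomial (Fin k) ℚ) * ∏ j : Fin k, (X j) ^ μ j) = 1 := by
  ext n
  simp only [PowerSeries.coeff_mul, PowerSeries.coeff_mk, PowerSeries.coeff_one,
    sum_nincCount_mul_eq_ascentFreePoly]
  have hterm : ∀ p ∈ antidiagonal n,
      ((-1 : ℚ) ^ p.1 * (p.1 ! : ℚ)⁻¹) • hsymmPoly k p.1 *
          ((p.2 ! : ℚ)⁻¹ • ascentFreePoly k p.2) =
        (n ! : ℚ)⁻¹ • ((-1 : ℚ) ^ p.1 • cutPoly k n p.1) := by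
    rintro ⟨i, j⟩ hij
    rw [HasAntidiagonal.mem_antidiagonal] at hij
    subst hij
    rw [cutPoly_add, ← Nat.cast_smul_eq_nsmul ℚ, smul_mul_smul_comm, smul_smul, smul_smul,
      Nat.cast_add_choose]
    congr 1
    field_simp
  rw [sum_congr rfl hterm, ← smul_sum,
    Finset.Nat.sum_antidiagonal_eq_sum_range_succ (fun i _ => (-1 : ℚ) ^ i • cutPoly k n i),
    sum_range_neg_one_pow_smul_cutPoly]
  split_ifs with hn <;> simp [hn]

theorem colored_exterior_dimension_multiplicative_inverse (k : ℕ) (hk : 1 ≤ k) :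
    (PowerSeries.mk fun n => ((-1 : ℚ) ^ n * (Nat.factorial n : ℚ)⁻¹) • hsymmPoly k n) *
      (PowerSeries.mk fun n => (Nat.factorial n : ℚ)⁻¹ •
        ∑ μ ∈ Finset.Nat.antidiagonalTuple k n,
          (nincCount n k μ : MvPolynomial (Fin k) ℚ) * ∏ j : Fin k, (X j) ^ μ j) = 1 :=
  colored_exterior_dimension_multiplicative_inverse_general k
end

section
/- Fix n ≥ 1 and k ≥ 1, and let P be the finite bounded poset obtained from B_n^{[k]} by adjoining a maximum 1̂. Then the Möbius function of P satisfies μ_P(0̂, 1̂) = (−1)^{n+1} · |{ (σ,c) ∈ Ninc_n^{[k]} : c(σ(n)) ≠ 1 }|. -/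
open Finset

theorem eq_of_moebius_recursion {P : Type*} [PartialOrder P] [WellFoundedLT P]
    (S : P → P → Finset P) (hS : ∀ x y z, z ∈ S x y ↔ x ≤ z ∧ z ≤ y) {x : P} {F G : P → ℤ}
    (hF₀ : F x = 1) (hF : ∀ y, x < y → ∑ z ∈ S x y, F z = 0)
    (hG₀ : G x = 1) (hG : ∀ y, x < y → ∑ z ∈ S x y, G z = 0) {y : P} (hxy : x ≤ y) :
    F y = G y := by
  classical
  induction y using WellFoundedLT.induction with
  | _ y ih =>
  rcases hxy.eq_or_lt with rfl | hlt
  · rw [hF₀, hG₀]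
  have hy : y ∈ S x y := (hS x y y).2 ⟨hlt.le, le_rfl⟩
  have herase : ∑ z ∈ (S x y).erase y, F z = ∑ z ∈ (S x y).erase y, G z := by
    refine sum_congr rfl fun z hz => ?_
    obtain ⟨hzy, hz⟩ := mem_erase.1 hz
    exact ih z (lt_of_le_of_ne ((hS x y z).1 hz).2 hzy) ((hS x y z).1 hz).1
  have hFG := (hF y hlt).trans (hG y hlt).symm
  rwa [← sum_erase_add _ _ hy, ← sum_erase_add _ _ hy, herase, add_right_inj] at hFG

lemma sum_withTop {α M : Type*} [Fintype α] [AddCommMonoid M] (f : WithTop α → M) :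
    ∑ z, f z = f ⊤ + ∑ a : α, f a :=
  Fintype.sum_option f

namespace WeightedBooleanAlgebra

open scoped Classical

variable {n k : ℕ}

abbrev Letter (n k : ℕ) := Fin n × Fin k

def NoAscent (p q : Letter n k) : Prop := ¬ (p.1 < q.1 ∧ p.2 ≤ q.2)

lemma NoAscent.mono {p q r : Letter n k} (h : NoAscent p q) (hrq : r ≤ q) : NoAscent p r :=
  fun ⟨h₁, h₂⟩ => h ⟨h₁.trans_le hrq.1, h₂.trans hrq.2⟩

def IsWord (l : List (Letter n k)) : Prop := l.IsChain NoAscent ∧ (l.map Prod.fst).Nodup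

def vertices (l : List (Letter n k)) : Finset (Fin n) := (l.map Prod.fst).toFinset

def colors (l : List (Letter n k)) : Multiset (Fin k) := l.map Prod.snd

lemma card_vertices {l : List (Letter n k)} (hl : IsWord l) : #(vertices l) = l.length := by
  rw [vertices, List.toFinset_card_of_nodup hl.2, List.length_map]

lemma card_colors (l : List (Letter n k)) : Multiset.card (colors l) = l.length := by
  simp [colors]

lemma vertices_append_singleton (l : List (Letter n k)) (p : Letter n k) :
    vertices (l ++ [p]) = insert p.1 (vertices l) := by
  ext; simp [vertices]

lemma colors_append_singleton (l : List (Letter n k)) (p : Letter n k) :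
    colors (l ++ [p]) = p.2 ::ₘ colors l := by
  simp [colors]

lemma isWord_append_singleton {l : List (Letter n k)} {p : Letter n k} :
    IsWord (l ++ [p]) ↔ IsWord l ∧ p.1 ∉ vertices l ∧ ∀ q ∈ l.getLast?, NoAscent q p := by
  simp only [IsWord, List.isChain_append, List.isChain_singleton, List.head?_cons,
    Option.mem_some_iff, List.map_append, List.map_cons, List.map_nil,
    List.nodup_append, List.nodup_singleton, vertices, List.mem_toFinset]
  aesop

abbrev Word (n k : ℕ) := {l : List (Letter n k) // IsWord l}

noncomputable instance : Fintype (Word n k) :=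
  Fintype.ofInjective (fun w : Word n k => (⟨w.1, w.2.2.of_map _⟩ : {l : List _ // l.Nodup}))
    fun _ _ h => Subtype.ext (Subtype.mk.inj h)

section Budget

variable (A : Finset (Fin n)) (ν : Multiset (Fin k))

def Fits (l : List (Letter n k)) : Prop := vertices l ⊆ A ∧ colors l ≤ ν

def FreeColor (l : List (Letter n k)) (c : Fin k) : Prop := (colors l).count c < ν.count c

variable {A ν}

lemma FreeColor.of_append {l l' : List (Letter n k)} {c : Fin k} (h : FreeColor ν (l ++ l') c) :
    FreeColor ν l c :=
  lt_of_le_of_lt (by simp [colors]) h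

lemma freeColor_append_singleton_of_ne {l : List (Letter n k)} {p : Letter n k} {c : Fin k}
    (hc : c ≠ p.2) : FreeColor ν (l ++ [p]) c ↔ FreeColor ν l c := by
  rw [FreeColor, FreeColor, colors_append_singleton, Multiset.count_cons_of_ne hc]

lemma fits_append_singleton {l : List (Letter n k)} {p : Letter n k} :
    Fits A ν (l ++ [p]) ↔ Fits A ν l ∧ p.1 ∈ A ∧ FreeColor ν l p.2 := by
  simp only [Fits, FreeColor, vertices_append_singleton, insert_subset_iff,
    colors_append_singleton, Multiset.le_iff_count, Multiset.count_cons]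
  constructor
  · rintro ⟨⟨hpA, hA⟩, hν⟩
    refine ⟨⟨hA, fun c => le_trans (by omega) (hν c)⟩, hpA, by simpa using hν p.2⟩
  · rintro ⟨⟨hA, hν⟩, hpA, hp⟩
    refine ⟨⟨hpA, hA⟩, fun c => ?_⟩
    split_ifs with h
    · subst h; omega
    · simpa using hν c

variable (A ν) in
noncomputable def extensions (l : List (Letter n k)) : Finset (Letter n k) :=
  {p | p.1 ∈ A ∧ p.1 ∉ vertices l ∧ FreeColor ν l p.2 ∧ ∀ q ∈ l.getLast?, NoAscent q p}

lemma mem_extensions_iff {l : List (Letter n k)} (hl : IsWord l) (hf : Fits A ν l)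
    {p : Letter n k} : p ∈ extensions A ν l ↔ IsWord (l ++ [p]) ∧ Fits A ν (l ++ [p]) := by
  simp only [extensions, mem_filter_univ, isWord_append_singleton, fits_append_singleton]
  tauto

lemma mem_extensions_of_le {l : List (Letter n k)} {p r : Letter n k}
    (hp : p ∈ extensions A ν l) (hA : r.1 ∈ A) (hl : r.1 ∉ vertices l) (hc : FreeColor ν l r.2)
    (hrp : r ≤ p) : r ∈ extensions A ν l := by
  simp only [extensions, mem_filter_univ] at hp ⊢
  exact ⟨hA, hl, hc, fun q hq => (hp.2.2.2 q hq).mono hrp⟩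

lemma exists_getLast?_lt_of_extensions_eq_empty {l : List (Letter n k)} (h : extensions A ν l = ∅)
    {x : Fin n} {c : Fin k} (hA : x ∈ A) (hl : x ∉ vertices l) (hc : FreeColor ν l c) :
    ∃ q ∈ l.getLast?, q.1 < x ∧ q.2 ≤ c := by
  by_contra! hq
  have : (x, c) ∈ extensions A ν l := by
    simp only [extensions, mem_filter_univ]
    exact ⟨hA, hl, hc, fun q hq' ⟨h₁, h₂⟩ => (hq q hq' h₁).not_ge h₂⟩
  simp [h] at this

variable (A ν) in
/-- The lexicographically least letter that can be appended to `l`. -/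
noncomputable def canonicalExtension (l : List (Letter n k)) (h : (extensions A ν l).Nonempty) :
    Letter n k :=
  ofLex (((extensions A ν l).map toLex.toEmbedding).min' (h.map))

lemma canonicalExtension_mem {l : List (Letter n k)} (h : (extensions A ν l).Nonempty) :
    canonicalExtension A ν l h ∈ extensions A ν l := by
  simpa [canonicalExtension] using min'_mem _ (h.map (f := toLex.toEmbedding))

lemma toLex_canonicalExtension_le {l : List (Letter n k)} (h : (extensions A ν l).Nonempty)
    {q : Letter n k} (hq : q ∈ extensions A ν l) :
    toLex (canonicalExtension A ν l h) ≤ toLex q := by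
  simpa [canonicalExtension] using min'_le _ _ (mem_map_of_mem toLex.toEmbedding hq)

lemma extensions_append_canonicalExtension {l : List (Letter n k)}
    (h : (extensions A ν l).Nonempty) :
    extensions A ν (l ++ [canonicalExtension A ν l h]) = ∅ := by
  set p := canonicalExtension A ν l h
  have hp := canonicalExtension_mem h
  simp only [extensions, mem_filter_univ] at hp
  refine eq_empty_of_forall_notMem fun q hq => ?_
  simp only [extensions, mem_filter_univ, vertices_append_singleton, mem_insert, not_or,
    List.getLast?_concat, Option.mem_some_iff, forall_eq'] at hq
  obtain ⟨hqA, ⟨hqp, hql⟩, hqc, hpq⟩ := hq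
  rcases lt_or_gt_of_ne hqp with hlt | hgt
  · have hr : (q.1, p.2) ∈ extensions A ν l :=
      mem_extensions_of_le (canonicalExtension_mem h) hqA hql hp.2.2.1 ⟨hlt.le, le_rfl⟩
    exact (toLex_canonicalExtension_le h hr).not_gt (Prod.Lex.toLex_lt_toLex.2 (.inl hlt))
  · have hc : q.2 < p.2 := lt_of_not_ge fun hle => hpq ⟨hgt, hle⟩
    have hr : (p.1, q.2) ∈ extensions A ν l :=
      mem_extensions_of_le (canonicalExtension_mem h) hp.1 hp.2.1 hqc.of_append ⟨le_rfl, hc.le⟩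
    exact (toLex_canonicalExtension_le h hr).not_gt (Prod.Lex.toLex_lt_toLex.2 (.inr ⟨rfl, hc⟩))

variable (A ν) in
def EndsCanonically (l : List (Letter n k)) : Prop :=
  ∃ l' h, l = l' ++ [canonicalExtension A ν l' h]

variable (A ν) in
def Active (l : List (Letter n k)) : Prop :=
  (extensions A ν l).Nonempty ∨ EndsCanonically A ν l

variable (A ν) in
noncomputable def toggle (l : List (Letter n k)) : List (Letter n k) :=
  if h : (extensions A ν l).Nonempty then l ++ [canonicalExtension A ν l h] else l.dropLast

lemma toggle_of_nonempty {l : List (Letter n k)} (h : (extensions A ν l).Nonempty) :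
    toggle A ν l = l ++ [canonicalExtension A ν l h] :=
  dif_pos h

lemma toggle_append_canonicalExtension {l : List (Letter n k)}
    (h : (extensions A ν l).Nonempty) : toggle A ν (l ++ [canonicalExtension A ν l h]) = l := by
  rw [toggle, dif_neg (by simp [extensions_append_canonicalExtension h]), List.dropLast_concat]

lemma toggle_toggle {l : List (Letter n k)} (h : Active A ν l) : toggle A ν (toggle A ν l) = l := by
  rcases h with h | ⟨l, h, rfl⟩
  · rw [toggle_of_nonempty h, toggle_append_canonicalExtension]
  · rw [toggle_append_canonicalExtension, toggle_of_nonempty h]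

lemma active_toggle {l : List (Letter n k)} (h : Active A ν l) : Active A ν (toggle A ν l) := by
  rcases h with h | ⟨l, h, rfl⟩
  · exact .inr ⟨l, h, toggle_of_nonempty h⟩
  · exact .inl (by rwa [toggle_append_canonicalExtension])

lemma neg_one_pow_length_toggle {l : List (Letter n k)} (h : Active A ν l) :
    (-1 : ℤ) ^ (toggle A ν l).length = -(-1) ^ l.length := by
  rcases h with h | ⟨l, h, rfl⟩
  · simp [toggle_of_nonempty h, pow_succ]
  · simp [toggle_append_canonicalExtension, pow_succ]

lemma isWord_toggle {l : List (Letter n k)} (hl : IsWord l) (hf : Fits A ν l) (h : Active A ν l) :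
    IsWord (toggle A ν l) ∧ Fits A ν (toggle A ν l) := by
  rcases h with h | ⟨l, h, rfl⟩
  · rw [toggle_of_nonempty h]
    exact (mem_extensions_iff hl hf).1 (canonicalExtension_mem h)
  · rw [toggle_append_canonicalExtension]
    exact ⟨(isWord_append_singleton.1 hl).1, (fits_append_singleton.1 hf).1⟩

variable (A ν) in
noncomputable def fitting : Finset (Word n k) :=
  {w | Fits A ν w.1}

variable (A ν) in
lemma sum_fitting_eq_sum_not_active :
    ∑ w ∈ fitting A ν, (-1 : ℤ) ^ w.1.length =
      ∑ w ∈ fitting A ν with ¬Active A ν w.1, (-1 : ℤ) ^ w.1.length := by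
  rw [← sum_filter_add_sum_filter_not _ (fun w : Word n k => Active A ν w.1), add_eq_right]
  have hmem {w : Word n k} (hw : w ∈ {w ∈ fitting A ν | Active A ν w.1}) :
      Fits A ν w.1 ∧ Active A ν w.1 := by simpa [fitting] using hw
  refine sum_involution
    (fun w hw => ⟨toggle A ν w.1, (isWord_toggle w.2 (hmem hw).1 (hmem hw).2).1⟩)
    (fun w hw => ?_) (fun w hw hne heq => ?_) (fun w hw => ?_) (fun w hw => ?_)
  · simp [neg_one_pow_length_toggle (hmem hw).2]
  · have := neg_one_pow_length_toggle (hmem hw).2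
    rw [show toggle A ν w.1 = w.1 from congrArg Subtype.val heq] at this
    exact hne (by linarith)
  · simp only [fitting, mem_filter, mem_univ, true_and]
    exact ⟨(isWord_toggle w.2 (hmem hw).1 (hmem hw).2).2, active_toggle (hmem hw).2⟩
  · exact Subtype.ext (toggle_toggle (hmem hw).2)

lemma exists_lt_of_not_endsCanonically {l : List (Letter n k)} {p : Letter n k}
    (hp : p ∈ extensions A ν l) (h : ¬EndsCanonically A ν (l ++ [p])) :
    ∃ q ∈ extensions A ν l, toLex q < toLex p := by
  by_contra! hq
  refine h ⟨l, ⟨p, hp⟩, congrArg (l ++ [·]) (toLex.injective ?_)⟩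
  exact le_antisymm (hq _ (canonicalExtension_mem _)) (toLex_canonicalExtension_le _ hp)

lemma not_active_append_singleton {l : List (Letter n k)} {p : Letter n k}
    (hl : IsWord (l ++ [p])) (hf : Fits A ν (l ++ [p])) (h : ¬Active A ν (l ++ [p])) :
    ((∃ x ∈ A, x ∉ vertices (l ++ [p])) ∧ ∀ c, ¬FreeColor ν (l ++ [p]) c) ∨
      ((∀ x ∈ A, x ∈ vertices (l ++ [p])) ∧ ∃ c < p.2, FreeColor ν (l ++ [p]) c) := by
  have hp : p ∈ extensions A ν l :=
    (mem_extensions_iff (isWord_append_singleton.1 hl).1 (fits_append_singleton.1 hf).1).2 ⟨hl, hf⟩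
  simp only [Active, not_or, not_nonempty_iff_eq_empty] at h
  obtain ⟨q, hq, hqp⟩ := exists_lt_of_not_endsCanonically hp h.2
  simp only [extensions, mem_filter_univ] at hq
  -- `q` leaves its element (if `q.1 < p.1`) or its color (if `q.1 = p.1`) free after `p`;
  -- as nothing can follow `p`, the other kind of resource is exhausted.
  rcases Prod.Lex.toLex_lt_toLex.1 hqp with h₁ | ⟨h₁, h₂⟩
  · have hqv : q.1 ∉ vertices (l ++ [p]) := by simp [vertices_append_singleton, h₁.ne, hq.2.1]
    refine .inl ⟨⟨q.1, hq.1, hqv⟩, fun c hc => ?_⟩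
    obtain ⟨r, hr, hr₁, -⟩ := exists_getLast?_lt_of_extensions_eq_empty h.1 hq.1 hqv hc
    obtain rfl : p = r := by simpa using hr
    exact hr₁.not_gt h₁
  · have hqc : FreeColor ν (l ++ [p]) q.2 := (freeColor_append_singleton_of_ne h₂.ne).2 hq.2.2.1
    refine .inr ⟨fun x hx => ?_, q.2, h₂, hqc⟩
    by_contra hxv
    obtain ⟨r, hr, -, hr₂⟩ := exists_getLast?_lt_of_extensions_eq_empty h.1 hx hxv hqc
    obtain rfl : p = r := by simpa using hr
    exact hr₂.not_gt h₂

lemma exists_notMem_vertices_iff {l : List (Letter n k)} (hl : IsWord l) (hA : vertices l ⊆ A) :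
    (∃ x ∈ A, x ∉ vertices l) ↔ l.length < #A := by
  rw [← card_vertices hl, ← ssubset_iff_of_subset hA]
  exact ⟨card_lt_card, fun h => ssubset_of_subset_of_ne hA (by rintro rfl; exact h.false)⟩

lemma exists_freeColor_iff {l : List (Letter n k)} (hν : colors l ≤ ν) :
    (∃ c, FreeColor ν l c) ↔ l.length < Multiset.card ν := by
  rw [← card_colors l]
  constructor
  · rintro ⟨c, hc⟩
    exact Multiset.card_lt_card (lt_of_le_of_ne hν fun h => hc.ne (by rw [h]))
  · intro h
    by_contra! hc
    simp only [FreeColor, not_lt] at hc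
    exact h.ne (congrArg _ (le_antisymm hν (Multiset.le_iff_count.2 hc)))

lemma active_of_card_eq (hA : A.Nonempty) (hν : Multiset.card ν = #A) {l : List (Letter n k)}
    (hl : IsWord l) (hf : Fits A ν l) : Active A ν l := by
  have hiff : (∃ x ∈ A, x ∉ vertices l) ↔ ∃ c, FreeColor ν l c := by
    rw [exists_notMem_vertices_iff hl hf.1, exists_freeColor_iff hf.2, hν]
  by_contra h
  obtain rfl | ⟨l, p, rfl⟩ := l.eq_nil_or_concat'
  · obtain ⟨x, hx⟩ := hA
    have hxv : x ∉ vertices ([] : List (Letter n k)) := by simp [vertices]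
    obtain ⟨c, hc⟩ := hiff.1 ⟨x, hx, hxv⟩
    have hext : extensions A ν [] = ∅ := not_nonempty_iff_eq_empty.1 fun h' => h (.inl h')
    obtain ⟨q, hq, -⟩ := exists_getLast?_lt_of_extensions_eq_empty hext hx hxv hc
    simp at hq
  · rcases not_active_append_singleton hl hf h with ⟨hx, hc⟩ | ⟨hx, c, -, hc⟩
    · obtain ⟨c, hc'⟩ := hiff.1 hx
      exact hc c hc'
    · obtain ⟨x, hxA, hxv⟩ := hiff.2 ⟨c, hc⟩
      exact hxv (hx x hxA)

end Budget

variable (n k) in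
/-- Each color `n + 1` times: an unlimited supply, since a word has at most `n` letters. -/
def fullBudget : Multiset (Fin k) := (n + 1) • univ.val

lemma freeColor_fullBudget {l : List (Letter n k)} (hl : IsWord l) (c : Fin k) :
    FreeColor (fullBudget n k) l c := by
  have hlen : l.length ≤ n := by simpa using hl.2.length_le_card
  simp only [FreeColor, fullBudget, Multiset.count_nsmul, Multiset.count_univ, mul_one]
  exact (Multiset.count_le_card _ _).trans_lt (by rw [card_colors]; omega)

lemma fits_fullBudget {l : List (Letter n k)} (hl : IsWord l) : Fits univ (fullBudget n k) l :=
  ⟨subset_univ _, Multiset.le_iff_count.2 fun c => (freeColor_fullBudget hl c).le⟩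

lemma not_active_fullBudget_iff (hk : 0 < k) {l : List (Letter n k)} (hl : IsWord l) :
    ¬Active univ (fullBudget n k) l ↔ l.length = n ∧ ∀ p ∈ l.getLast?, p.2.val ≠ 0 := by
  have hfull : (∀ x, x ∈ vertices l) ↔ l.length = n := by
    rw [← card_vertices hl, ← eq_univ_iff_forall, ← card_eq_iff_eq_univ, Fintype.card_fin]
  constructor
  · intro h
    obtain rfl | ⟨l, p, rfl⟩ := l.eq_nil_or_concat'
    · refine ⟨?_, by simp⟩
      by_contra hn
      have hext : extensions univ (fullBudget n k) [] = ∅ :=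
        not_nonempty_iff_eq_empty.1 fun h' => h (.inl h')
      obtain ⟨q, hq, -⟩ := exists_getLast?_lt_of_extensions_eq_empty hext
        (x := ⟨0, by simp at hn; omega⟩) (mem_univ _) (by simp [vertices])
        (freeColor_fullBudget hl ⟨0, hk⟩)
      simp at hq
    · rcases not_active_append_singleton hl (fits_fullBudget hl) h with ⟨-, hc⟩ | ⟨hx, c, hcp, -⟩
      · exact absurd (freeColor_fullBudget hl ⟨0, hk⟩) (hc _)
      · refine ⟨hfull.1 fun x => hx x (mem_univ x), ?_⟩
        simp only [List.getLast?_concat, Option.mem_some_iff, forall_eq']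
        have := Fin.lt_def.1 hcp
        omega
  · rintro ⟨hlen, hlast⟩ (⟨p, hp⟩ | ⟨l, h, rfl⟩)
    · simp only [extensions, mem_filter_univ] at hp
      exact hp.2.1 (hfull.2 hlen p.1)
    · have hp := canonicalExtension_mem h
      set p := canonicalExtension univ (fullBudget n k) l h
      have hp0 : p.2.val ≠ 0 := hlast p (by simp)
      have hr : (p.1, (⟨0, hk⟩ : Fin k)) ∈ extensions univ (fullBudget n k) l := by
        refine mem_extensions_of_le hp (mem_univ _) ?_
          (freeColor_fullBudget (isWord_append_singleton.1 hl).1 _) ⟨le_rfl, Nat.zero_le _⟩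
        simp only [extensions, mem_filter_univ] at hp
        exact hp.2.1
      exact (toLex_canonicalExtension_le h hr).not_gt
        (Prod.Lex.toLex_lt_toLex.2 (.inr ⟨rfl, Fin.lt_def.2 (Nat.pos_of_ne_zero hp0)⟩))

variable (n k) in
noncomputable def fixedWords : Finset (Word n k) :=
  {w | w.1.length = n ∧ ∀ p ∈ w.1.getLast?, p.2.val ≠ 0}

lemma sum_neg_one_pow_length (hk : 0 < k) :
    ∑ w : Word n k, (-1 : ℤ) ^ w.1.length =
      (-1) ^ n * #(fixedWords n k) := by
  have huniv : fitting univ (fullBudget n k) = univ :=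
    eq_univ_of_forall fun w => by simpa [fitting] using fits_fullBudget w.2
  rw [← huniv, sum_fitting_eq_sum_not_active, huniv, mul_comm, ← nsmul_eq_mul, ← sum_const]
  refine sum_congr (filter_congr fun w _ => not_active_fullBudget_iff hk w.2) fun w hw => ?_
  rw [(mem_filter_univ w).1 hw |>.1]

def coloredWord (σ : Equiv.Perm (Fin n)) (c : Fin n → Fin k) : List (Letter n k) :=
  List.ofFn fun i => (σ i, c (σ i))

lemma isWord_coloredWord_iff (σ : Equiv.Perm (Fin n)) (c : Fin n → Fin k) :
    IsWord (coloredWord σ c) ↔ ¬HasAscent σ c := by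
  simp only [IsWord, coloredWord, List.isChain_ofFn, List.map_ofFn, HasAscent, NoAscent,
    not_exists]
  exact and_iff_left (List.nodup_ofFn.2 σ.injective)

lemma getLast?_coloredWord (hn : 1 ≤ n) (σ : Equiv.Perm (Fin n)) (c : Fin n → Fin k) :
    (coloredWord σ c).getLast? = some (σ ⟨n - 1, by omega⟩, c (σ ⟨n - 1, by omega⟩)) := by
  simp [coloredWord, List.getLast?_eq_getElem?]
  omega

lemma coloredWord_injective {σ₁ σ₂ : Equiv.Perm (Fin n)} {c₁ c₂ : Fin n → Fin k}
    (h : coloredWord σ₁ c₁ = coloredWord σ₂ c₂) : σ₁ = σ₂ ∧ c₁ = c₂ := by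
  have h' := List.ofFn_inj.1 h
  have hσ : σ₁ = σ₂ := Equiv.ext fun i => congrArg Prod.fst (congrFun h' i)
  subst hσ
  refine ⟨rfl, funext fun x => ?_⟩
  simpa using congrArg Prod.snd (congrFun h' (σ₁.symm x))

lemma exists_coloredWord {l : List (Letter n k)} (hl : IsWord l) (hlen : l.length = n) :
    ∃ σ c, coloredWord σ c = l := by
  have hinj : Function.Injective fun i : Fin n => (l[i.1]'(i.2.trans_eq hlen.symm)).1 :=
    fun i j hij => Fin.ext
      ((hl.2.getElem_inj_iff (hi := by simp [hlen]) (hj := by simp [hlen])).1 (by simpa using hij))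
  set σ := Equiv.ofBijective _ hinj.bijective_of_finite
  refine ⟨σ, fun x => (l[(σ.symm x).1]'((σ.symm x).2.trans_eq hlen.symm)).2, ?_⟩
  refine List.ext_getElem (by simp [coloredWord, hlen]) fun i h₁ h₂ => ?_
  simp [coloredWord]
  rfl

lemma card_fixedWords (hn : 1 ≤ n) :
    #(fixedWords n k) =
      Nat.card {w : Equiv.Perm (Fin n) × (Fin n → Fin k) //
        ¬HasAscent w.1 w.2 ∧ (w.2 (w.1 ⟨n - 1, by omega⟩)).val ≠ 0} := by
  rw [Nat.card_eq_fintype_card, Fintype.card_subtype, eq_comm]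
  refine card_bij (fun w hw => ⟨coloredWord w.1 w.2,
    (isWord_coloredWord_iff _ _).2 ((mem_filter_univ _).1 hw).1⟩) ?_ ?_ ?_
  · rintro ⟨σ, c⟩ hw
    simp only [fixedWords, mem_filter_univ] at hw ⊢
    refine ⟨by simp [coloredWord], ?_⟩
    simpa [getLast?_coloredWord hn] using hw.2
  · intro w₁ _ w₂ _ h
    obtain ⟨hσ, hc⟩ := coloredWord_injective (Subtype.mk.inj h)
    exact Prod.ext hσ hc
  · rintro ⟨l, hl⟩ hw
    simp only [fixedWords, mem_filter_univ] at hw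
    obtain ⟨σ, c, rfl⟩ := exists_coloredWord hl hw.1
    refine ⟨(σ, c), ?_, rfl⟩
    simp only [mem_filter_univ]
    refine ⟨(isWord_coloredWord_iff σ c).1 hl, ?_⟩
    simpa [getLast?_coloredWord hn] using hw.2

noncomputable instance : Fintype (WSubK n k) :=
  Fintype.ofEquiv (Σ A : Finset (Fin n), Sym (Fin k) #A)
    { toFun := fun s => ⟨s.1, s.2.1, s.2.2⟩
      invFun := fun x => ⟨x.carrier, x.wt, x.card_eq⟩
      left_inv := fun _ => rfl
      right_inv := fun _ => rfl }

instance : OrderBot (WSubK n k) where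
  bot := ⟨∅, 0, by simp⟩
  bot_le x := ⟨empty_subset _, Multiset.zero_le _⟩

lemma nonempty_of_bot_lt {x : WSubK n k} (hx : ⊥ < x) : x.carrier.Nonempty := by
  rw [nonempty_iff_ne_empty]
  intro h
  refine hx.ne (WSubK.ext h.symm ?_)
  have := x.card_eq
  rw [h, card_empty, Multiset.card_eq_zero] at this
  exact this.symm

def Word.toWSubK (w : Word n k) : WSubK n k :=
  ⟨vertices w.1, colors w.1, by rw [card_colors, card_vertices w.2]⟩

noncomputable def signedCount (x : WSubK n k) : ℤ :=
  ∑ w : Word n k with w.toWSubK = x, (-1) ^ w.1.length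

lemma signedCount_bot : signedCount (⊥ : WSubK n k) = 1 := by
  have hnil : IsWord ([] : List (Letter n k)) := ⟨List.isChain_nil, List.nodup_nil⟩
  rw [signedCount, sum_eq_single_of_mem ⟨[], hnil⟩]
  · simp
  · simp only [mem_filter_univ]
    exact WSubK.ext (by simp [Word.toWSubK, vertices]; rfl) (by simp [Word.toWSubK, colors]; rfl)
  · intro w hw hne
    refine absurd (Subtype.ext ?_) hne
    have h : colors w.1 = 0 := congrArg WSubK.wt ((mem_filter_univ w).1 hw)
    simpa [colors] using h

lemma toWSubK_le_iff {w : Word n k} {x : WSubK n k} :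
    w.toWSubK ≤ x ↔ Fits x.carrier x.wt w.1 :=
  Iff.rfl

lemma sum_signedCount_le (x : WSubK n k) :
    ∑ z with z ≤ x, signedCount z = ∑ w ∈ fitting x.carrier x.wt, (-1 : ℤ) ^ w.1.length := by
  rw [← sum_fiberwise_of_maps_to (g := Word.toWSubK) (t := {z | z ≤ x}) fun w hw => by
    simpa [fitting, toWSubK_le_iff] using hw]
  refine sum_congr rfl fun z hz => sum_congr (ext fun w => ?_) fun _ _ => rfl
  simp only [mem_filter_univ] at hz
  simp only [fitting, mem_filter, mem_univ, true_and, ← toWSubK_le_iff]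
  exact ⟨fun h => ⟨h ▸ hz, h⟩, And.right⟩

lemma sum_signedCount_of_bot_lt {x : WSubK n k} (hx : ⊥ < x) :
    ∑ z with z ≤ x, signedCount z = 0 := by
  rw [sum_signedCount_le, sum_fitting_eq_sum_not_active, sum_eq_zero]
  intro w hw
  simp only [fitting, mem_filter, mem_univ, true_and] at hw
  exact absurd (active_of_card_eq (nonempty_of_bot_lt hx) x.card_eq w.2 hw.1) hw.2

lemma sum_signedCount (hk : 0 < k) : ∑ x : WSubK n k, signedCount x =
    (-1) ^ n * #(fixedWords n k) := by
  rw [← sum_neg_one_pow_length hk]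
  exact sum_fiberwise univ Word.toWSubK _

variable (n k) in
/-- The values of μ(0̂, ·), the one at `⊤` being forced by the recursion. -/
noncomputable def moebiusFromBot (z : WithTop (WSubK n k)) : ℤ :=
  z.recTopCoe (-∑ x : WSubK n k, signedCount x) signedCount

lemma sum_moebiusFromBot_of_bot_lt {y : WithTop (WSubK n k)} (hy : ⊥ < y) :
    ∑ z with ⊥ ≤ z ∧ z ≤ y, moebiusFromBot n k z = 0 := by
  simp only [bot_le, true_and]
  induction y using WithTop.recTopCoe with
  | top =>
    rw [filter_true_of_mem fun _ _ => le_top, sum_withTop]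
    simp [moebiusFromBot]
  | coe x =>
    rw [sum_filter, sum_withTop]
    simpa [moebiusFromBot, ← sum_filter] using sum_signedCount_of_bot_lt (WithTop.coe_lt_coe.1 hy)

end WeightedBooleanAlgebra

open WeightedBooleanAlgebra

theorem moebius_of_hat_weighted_boolean_algebra (n k : ℕ) (hn : 1 ≤ n) (hk : 1 ≤ k)
    (S : WithTop (WSubK n k) → WithTop (WSubK n k) → Finset (WithTop (WSubK n k)))
    (hS : ∀ x y z : WithTop (WSubK n k), z ∈ S x y ↔ x ≤ z ∧ z ≤ y)
    (f : WithTop (WSubK n k) → WithTop (WSubK n k) → ℤ)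
    (hrefl : ∀ x : WithTop (WSubK n k), f x x = 1)
    (hrec : ∀ x y : WithTop (WSubK n k), x < y → ∑ z ∈ S x y, f x z = 0) :
    f ((⟨∅, 0, by simp⟩ : WSubK n k) : WithTop (WSubK n k)) ⊤ =
      (-1) ^ (n + 1) *
        (Nat.card {w : Equiv.Perm (Fin n) × (Fin n → Fin k) //
          ¬ HasAscent w.1 w.2 ∧ (w.2 (w.1 ⟨n - 1, by omega⟩)).val ≠ 0} : ℤ) := by
  classical
  have hS' (y : WithTop (WSubK n k)) : S ⊥ y = ({z | ⊥ ≤ z ∧ z ≤ y} : Finset _) :=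
    ext fun z => by simp [hS]
  have key : f ⊥ ⊤ = moebiusFromBot n k ⊤ :=
    eq_of_moebius_recursion S hS (hrefl ⊥) (hrec ⊥) signedCount_bot
      (fun y hy => by rw [hS']; exact sum_moebiusFromBot_of_bot_lt hy) le_top
  change f ↑(⊥ : WSubK n k) ⊤ = _
  rw [WithTop.coe_bot, key, moebiusFromBot, WithTop.recTopCoe_top, sum_signedCount hk,
    card_fixedWords hn, pow_succ]
  ring
end

section
/- Let A be a set and let L ⊆ A × A be an arbitrary subset (the allowed links). Call a finite word a_1⋯a_m over A 'allowed' if (a_i, a_{i+1}) ∈ L for all 1 ≤ i < m, and 'forbidden' if (a_i, a_{i+1}) ∉ L for all 1 ≤ i < m (words of length ≤ 1 are both allowed and forbidden). Then for every n ≥ 1 and every word a_1⋯a_n ∈ A^n: ∑_{k=0}^{n} (−1)^{n−k} · [a_1⋯a_k is allowed] · [a_{k+1}⋯a_n is forbidden] = 0, where [·] is 1 if the condition holds and 0 otherwise. -/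
attribute [local instance] Classical.propDecidable

/-!
Only the pattern of links `ℓ i = L (a i) (a (i+1))` matters. Call `k ∈ [1, n]` a break of the
word if `a_0 ⋯ a_{k-1}` is allowed and `a_{k-1} ⋯ a_{n-1}` is forbidden. For `n ≥ 1`, a factorization at `k`
into an allowed prefix and a forbidden suffix exists exactly when `k` or `k + 1` is a break, and
never both, so the summand at `k` is `(-1)^(n-k) (β k + β (k+1))` with `β` the indicator of
breaks. This alternating sum telescopes to `(-1)^n β 0 + β (n+1) = 0`.
-/

theorem sum_range_neg_one_pow_sub_mul_add_succ {R : Type*} [CommRing R] (f : ℕ → R) (n : ℕ) :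
    ∑ k ∈ Finset.range (n + 1), (-1 : R) ^ (n - k) * (f k + f (k + 1)) =
      (-1) ^ n * f 0 + f (n + 1) := by
  induction n with
  | zero => simp
  | succ n ih =>
    have shift : ∑ k ∈ Finset.range (n + 1), (-1 : R) ^ (n + 1 - k) * (f k + f (k + 1)) =
        -∑ k ∈ Finset.range (n + 1), (-1 : R) ^ (n - k) * (f k + f (k + 1)) := by
      rw [← Finset.sum_neg_distrib]
      refine Finset.sum_congr rfl fun k hk => ?_
      rw [Nat.sub_add_comm (Finset.mem_range_succ_iff.mp hk), pow_succ]
      ring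
    rw [Finset.sum_range_succ, shift, ih, Nat.sub_self, pow_succ]
    ring

namespace LinkPattern

variable (ℓ : ℕ → Prop) (n : ℕ)

def AllowedPrefix (k : ℕ) : Prop := ∀ i, i + 1 < k → ℓ i

def ForbiddenSuffix (k : ℕ) : Prop := ∀ i, k ≤ i → i + 1 < n → ¬ ℓ i

def IsBreak (k : ℕ) : Prop :=
  0 < k ∧ k ≤ n ∧ AllowedPrefix ℓ k ∧ ForbiddenSuffix ℓ n (k - 1)

variable {ℓ n}

theorem allowedPrefix_and_forbiddenSuffix_iff (hn : 1 ≤ n) {k : ℕ} (hk : k ≤ n) :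
    AllowedPrefix ℓ k ∧ ForbiddenSuffix ℓ n k ↔ IsBreak ℓ n k ∨ IsBreak ℓ n (k + 1) := by
  constructor
  · rintro ⟨hpre, hsuf⟩
    by_cases hlink : 0 < k ∧ k < n ∧ ℓ (k - 1)
    · obtain ⟨hk0, hkn, hℓ⟩ := hlink
      refine Or.inr ⟨k.succ_pos, hkn, fun i hi => ?_, hsuf⟩
      rcases Nat.lt_or_ge (i + 1) k with hi' | hi'
      · exact hpre i hi'
      · obtain rfl : i = k - 1 := by omega
        exact hℓ
    · rcases Nat.eq_zero_or_pos k with rfl | hk0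
      · exact Or.inr ⟨Nat.one_pos, hn, fun i hi => by omega, hsuf⟩
      · refine Or.inl ⟨hk0, hk, hpre, fun i hi hin => ?_⟩
        rcases Nat.lt_or_ge i k with hik | hik
        · obtain rfl : i = k - 1 := by omega
          exact fun hℓ => hlink ⟨hk0, by omega, hℓ⟩
        · exact hsuf i hik hin
  · rintro (⟨hk0, -, hpre, hsuf⟩ | ⟨-, -, hpre, hsuf⟩)
    · exact ⟨hpre, fun i hi => hsuf i (by omega)⟩
    · exact ⟨fun i hi => hpre i (by omega), hsuf⟩

theorem not_isBreak_and_isBreak_succ (k : ℕ) : ¬ (IsBreak ℓ n k ∧ IsBreak ℓ n (k + 1)) := by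
  rintro ⟨⟨hk0, -, -, hsuf⟩, ⟨-, hkn, hpre, -⟩⟩
  exact hsuf (k - 1) le_rfl (by omega) (hpre (k - 1) (by omega))

theorem not_isBreak_zero : ¬ IsBreak ℓ n 0 := fun h => h.1.false

theorem not_isBreak_succ_self : ¬ IsBreak ℓ n (n + 1) := fun h => n.not_succ_le_self h.2.1

theorem alternating_sum_allowedPrefix_forbiddenSuffix (hn : 1 ≤ n) :
    ∑ k ∈ Finset.range (n + 1), (-1 : ℤ) ^ (n - k) *
        ((if AllowedPrefix ℓ k then 1 else 0) * (if ForbiddenSuffix ℓ n k then 1 else 0)) = 0 := by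
  let β : ℕ → ℤ := fun k => if IsBreak ℓ n k then 1 else 0
  have summand : ∀ k ∈ Finset.range (n + 1),
      ((if AllowedPrefix ℓ k then 1 else 0) * (if ForbiddenSuffix ℓ n k then 1 else 0) : ℤ) =
        β k + β (k + 1) := by
    intro k hk
    rw [ite_zero_mul_ite_zero, one_mul,
      if_congr (allowedPrefix_and_forbiddenSuffix_iff hn (Finset.mem_range_succ_iff.mp hk))
        rfl rfl]
    have := not_isBreak_and_isBreak_succ (ℓ := ℓ) (n := n) k
    by_cases h : IsBreak ℓ n k <;> by_cases h' : IsBreak ℓ n (k + 1) <;> simp_all [β]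
  rw [Finset.sum_congr rfl fun k hk => congrArg _ (summand k hk),
    sum_range_neg_one_pow_sub_mul_add_succ]
  simp [β, not_isBreak_zero, not_isBreak_succ_self]

end LinkPattern

theorem gessel_allowed_forbidden_factorization {A : Type*} (L : A → A → Prop)
    (n : ℕ) (hn : 1 ≤ n) (a : ℕ → A) :
    ∑ k ∈ Finset.range (n + 1),
        (-1 : ℤ) ^ (n - k) *
          ((if ∀ i : ℕ, i + 1 < k → L (a i) (a (i + 1)) then 1 else 0) *
           (if ∀ i : ℕ, k ≤ i → i + 1 < n → ¬ L (a i) (a (i + 1)) then 1 else 0)) = 0 :=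
  LinkPattern.alternating_sum_allowedPrefix_forbiddenSuffix (ℓ := fun i => L (a i) (a (i + 1))) hn
end

section
/- For every n ≥ 0 and k ≥ 1, the number of ascent-free colored permutations of [n] with colors in [k] is |Ninc_n^{[k]}| = ∑_{σ ∈ 𝔖_n} ∏_{B a maximal ascending run of σ} binom(k, |B|), where the product is over the maximal ascending runs of the word σ(1)⋯σ(n). -/
/-- The maximal ascending runs of the word `σ(1)⋯σ(n)`. -/
def runs {n : ℕ} (σ : Equiv.Perm (Fin n)) : List (List (Fin n)) :=
  ((List.finRange n).map σ).splitBy (fun a b => decide (a < b))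

/-!
Along the word `σ(1)⋯σ(n)`, a coloring `c` makes `(σ, c)` ascent-free exactly when `c` strictly
decreases along every maximal ascending run: inside a run each adjacent pair rises, so its colors
must drop, while at the junction of two runs `σ` descends and nothing is required. The runs
partition `[n]`, so `c` amounts to an independent choice, for each run `B`, of a strictly
decreasing map from the positions of `B` to `[k]`, i.e. of a `|B|`-subset of `[k]`.
-/

namespace List

variable {α : Type*}

theorem isChain_iff_forall_mem_splitBy (r : α → α → Bool) {R : α → α → Prop}
    (hR : ∀ a b, r a b = false → R a b) (l : List α) :
    l.IsChain R ↔ ∀ B ∈ l.splitBy r, B.IsChain R := by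
  conv_lhs => rw [← flatten_splitBy r l]
  rw [isChain_flatten (nil_notMem_splitBy r l), and_iff_left_iff_imp]
  refine fun _ => (isChain_getLast_head_splitBy r l).imp ?_
  rintro B B' ⟨hB, hB', hr⟩ x hx y hy
  rw [getLast?_eq_getLast_of_ne_nil hB, Option.mem_some_iff] at hx
  rw [head?_eq_some_head hB', Option.mem_some_iff] at hy
  subst hx hy
  exact hR _ _ hr

theorem IsChain.isChain_imp_iff {R S : α → α → Prop} {l : List α} (hR : l.IsChain R) :
    l.IsChain (fun a b => R a b → S a b) ↔ l.IsChain S := by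
  simp only [isChain_iff_getElem] at hR ⊢
  exact forall₂_congr fun i hi => imp_iff_right (hR i hi)

theorem sortedGT_map_iff_strictAnti {β : Type*} [Preorder β] (l : List α) (f : α → β) :
    (l.map f).SortedGT ↔ StrictAnti fun i : Fin l.length => f l[i] := by
  conv_lhs => rw [← ofFn_getElem (xs := l), map_ofFn]
  exact sortedGT_ofFn_iff

theorem bijective_getElem_getElem_of_nodup_flatten {L : List (List α)} (hnd : L.flatten.Nodup)
    (hmem : ∀ a, a ∈ L.flatten) :
    Function.Bijective fun p : Σ j : Fin L.length, Fin L[j].length => L[p.1][p.2] := by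
  obtain ⟨hnd, hdisj⟩ := nodup_flatten.mp hnd
  constructor
  · rintro ⟨j, i⟩ ⟨j', i'⟩ (h : L[j][i] = L[j'][i'])
    obtain rfl : j = j' := by
      by_contra hne
      have hmem : L[j][i] ∈ L[j] ∧ L[j][i] ∈ L[j'] := ⟨getElem_mem _, h ▸ getElem_mem _⟩
      rcases Fin.lt_or_lt_of_ne hne with hlt | hlt
      · exact pairwise_iff_getElem.mp hdisj j j' _ _ hlt hmem.1 hmem.2
      · exact pairwise_iff_getElem.mp hdisj j' j _ _ hlt hmem.2 hmem.1
    obtain rfl : i = i' := Fin.ext <| (hnd _ (getElem_mem _)).getElem_inj_iff.mp h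
    rfl
  · intro a
    obtain ⟨B, hB, ha⟩ := mem_flatten.mp (hmem a)
    obtain ⟨j, hj, rfl⟩ := getElem_of_mem hB
    obtain ⟨i, hi, rfl⟩ := getElem_of_mem ha
    exact ⟨⟨⟨j, hj⟩, ⟨i, hi⟩⟩, rfl⟩

end List

theorem card_strictMono_fin (C : Type*) [LinearOrder C] [Fintype C] (ℓ : ℕ) :
    Nat.card {g : Fin ℓ → C // StrictMono g} = (Fintype.card C).choose ℓ := by
  let e : {g : Fin ℓ → C // StrictMono g} ≃ {s : Finset C // s.card = ℓ} :=
    { toFun := fun g => ⟨Finset.univ.image g.1, by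
        rw [Finset.card_image_of_injective _ g.2.injective, Finset.card_univ, Fintype.card_fin]⟩
      invFun := fun s => ⟨s.1.orderEmbOfFin s.2, (s.1.orderEmbOfFin s.2).strictMono⟩
      left_inv := fun g => Subtype.ext <|
        (Finset.orderEmbOfFin_unique _ (fun x => Finset.mem_image_of_mem _ (Finset.mem_univ x))
          g.2).symm
      right_inv := fun s => Subtype.ext <| Finset.coe_inj.1 <| by
        rw [Finset.coe_image, Finset.coe_univ, Set.image_univ, Finset.range_orderEmbOfFin] }
  rw [Nat.card_congr e, Nat.card_eq_fintype_card, Fintype.card_finset_len]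

theorem card_strictAnti_fin (C : Type*) [LinearOrder C] [Fintype C] (ℓ : ℕ) :
    Nat.card {g : Fin ℓ → C // StrictAnti g} = (Fintype.card C).choose ℓ := by
  rw [← Fintype.card_orderDual C, ← card_strictMono_fin]
  exact Nat.card_congr <| Equiv.subtypeEquiv (Equiv.arrowCongr (.refl _) OrderDual.toDual)
    fun g => strictMono_toDual_comp_iff.symm

theorem card_forall_sortedGT_map {α C : Type*} [LinearOrder C] [Fintype C]
    (L : List (List α)) (hnd : L.flatten.Nodup) (hmem : ∀ a, a ∈ L.flatten) :
    Nat.card {c : α → C // ∀ B ∈ L, (B.map c).SortedGT} =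
      (L.map fun B => (Fintype.card C).choose B.length).prod := by
  let e := Equiv.ofBijective _ (List.bijective_getElem_getElem_of_nodup_flatten hnd hmem)
  have hsplit : {c : α → C // ∀ B ∈ L, (B.map c).SortedGT} ≃
      Π j : Fin L.length, {g : Fin L[j].length → C // StrictAnti g} :=
    (Equiv.subtypeEquiv ((Equiv.arrowCongr e.symm (.refl C)).trans (Equiv.piCurry fun _ _ => C))
      fun c => by
        rw [List.forall_mem_iff_get]
        exact forall_congr' fun j => List.sortedGT_map_iff_strictAnti _ c).trans
      Equiv.subtypePiEquivPi
  rw [Nat.card_congr hsplit, Nat.card_pi]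
  simp only [card_strictAnti_fin]
  exact Fin.prod_univ_fun_getElem L fun B => (Fintype.card C).choose B.length

section Runs

variable {n : ℕ} (σ : Equiv.Perm (Fin n))

theorem flatten_runs : (runs σ).flatten = (List.finRange n).map σ :=
  List.flatten_splitBy _ _

theorem nodup_flatten_runs : (runs σ).flatten.Nodup := by
  rw [flatten_runs]
  exact (List.nodup_finRange n).map σ.injective

theorem mem_flatten_runs (a : Fin n) : a ∈ (runs σ).flatten := by
  rw [flatten_runs, List.mem_map]
  exact ⟨σ.symm a, List.mem_finRange _, σ.apply_symm_apply a⟩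

theorem isChain_lt_of_mem_runs {B : List (Fin n)} (hB : B ∈ runs σ) : B.IsChain (· < ·) :=
  (List.isChain_of_mem_splitBy hB).imp fun _ _ h => of_decide_eq_true h

variable {C : Type*} [LinearOrder C] (c : Fin n → C)

theorem not_hasAscent_iff_isChain :
    ¬ HasAscent σ c ↔ ((List.finRange n).map σ).IsChain fun a b => a < b → c b < c a := by
  simp only [HasAscent, not_exists, not_and, not_le, List.isChain_iff_getElem, List.length_map,
    List.length_finRange, List.getElem_map, List.getElem_finRange]
  rfl

theorem not_hasAscent_iff_forall_mem_runs :
    ¬ HasAscent σ c ↔ ∀ B ∈ runs σ, (B.map c).SortedGT := by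
  rw [not_hasAscent_iff_isChain, List.isChain_iff_forall_mem_splitBy _
    (fun a b h hab => absurd (decide_eq_true hab) (Bool.eq_false_iff.mp h))]
  refine forall₂_congr fun B hB => ?_
  rw [(isChain_lt_of_mem_runs σ hB).isChain_imp_iff, List.sortedGT_iff_isChain, List.isChain_map]

end Runs

theorem colored_exterior_dimension_runs_general (n k : ℕ) :
    Nat.card {w : Equiv.Perm (Fin n) × (Fin n → Fin k) // ¬ HasAscent w.1 w.2} =
      ∑ σ : Equiv.Perm (Fin n), ((runs σ).map (fun B => Nat.choose k B.length)).prod := by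
  rw [Nat.card_congr (Equiv.subtypeProdEquivSigmaSubtype fun σ c => ¬ HasAscent σ c),
    Nat.card_sigma]
  refine Finset.sum_congr rfl fun σ _ => ?_
  rw [Nat.card_congr (Equiv.subtypeEquivRight (not_hasAscent_iff_forall_mem_runs σ)),
    card_forall_sortedGT_map _ (nodup_flatten_runs σ) (mem_flatten_runs σ), Fintype.card_fin]

theorem colored_exterior_dimension_runs (n k : ℕ) (hk : 1 ≤ k) :
    Nat.card {w : Equiv.Perm (Fin n) × (Fin n → Fin k) // ¬ HasAscent w.1 w.2} =
      ∑ σ : Equiv.Perm (Fin n), ((runs σ).map (fun B => Nat.choose k B.length)).prod :=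
  colored_exterior_dimension_runs_general n k
end
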